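/- arXiv:2304.11647 — 3 statements merged into one kernel-verified Lean document; each statement's English description precedes it below -/
import Mathlib

section
/- Let M be a non-degenerate Orlicz function satisfying the Δ₂ condition at zero, and let f : ℓ_M → ℝ ∪ {+∞} be a proper, lower semicontinuous, bounded below function. Then for every ε > 0 there exists a bounded real sequence a = (a_n) with 0 ≤ a_n < ε for all n such that the function f + g_a attains its minimum on ℓ_M. -/
open Filter Topology

/-- `σ_M(x) = Σ_{n} M(|x_n|) ∈ [0,∞]`. -/
noncomputable def sigmaM (M : ℝ → ℝ) (x : ℕ → ℝ) : ENNReal :=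
  ∑' n, ENNReal.ofReal (M |x n|)

/-- Membership in the Orlicz sequence space `ℓ_M`: `x` is a bounded sequence with
`σ_M(x/ρ) < ∞` for some `ρ > 0`. -/
def MemLM (M : ℝ → ℝ) (x : ℕ → ℝ) : Prop :=
  (∃ A : ℝ, ∀ n, |x n| ≤ A) ∧ ∃ ρ > 0, sigmaM M (fun n => x n / ρ) ≠ ⊤

/-- The Luxemburg norm `‖x‖ = inf {ρ > 0 : σ_M(x/ρ) ≤ 1}`. -/
noncomputable def luxNorm (M : ℝ → ℝ) (x : ℕ → ℝ) : ℝ :=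
  sInf {ρ : ℝ | 0 < ρ ∧ sigmaM M (fun n => x n / ρ) ≤ 1}

/-- An Orlicz function: continuous, non-decreasing, convex on `[0,∞)`, `M(0) = 0` and
`M(t) → ∞` as `t → ∞`. -/
structure IsOrliczFunction (M : ℝ → ℝ) : Prop where
  continuousOn : ContinuousOn M (Set.Ici 0)
  monotoneOn : MonotoneOn M (Set.Ici 0)
  convexOn : ConvexOn ℝ (Set.Ici 0) M
  map_zero : M 0 = 0
  tendsto_atTop : Tendsto M atTop atTop

/-- `M` satisfies the `Δ₂` condition at zero: `liminf_{t↓0} M(t)/M(2t) > 0`. -/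
def Delta2Zero (M : ℝ → ℝ) : Prop :=
  0 < liminf (fun t => M t / M (2 * t)) (𝓝[>] (0 : ℝ))

/-- `g_a(x) = Σ_n a_n M(|x_n|)`. -/
noncomputable def gA (M : ℝ → ℝ) (a : ℕ → ℝ) (x : ℕ → ℝ) : ℝ :=
  ∑' n, a n * M |x n|

section Aux
variable {M : ℝ → ℝ}

lemma orlicz_nonneg (hM : IsOrliczFunction M) {t : ℝ} (ht : 0 ≤ t) : 0 ≤ M t := by
  rw [← hM.map_zero]
  exact hM.monotoneOn Set.self_mem_Ici ht ht

lemma orlicz_doubling (hM : IsOrliczFunction M) (hnd : ∀ t > (0:ℝ), 0 < M t)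
    (hΔ : Delta2Zero M) :
    ∃ K δ₀ : ℝ, 1 ≤ K ∧ 0 < δ₀ ∧ ∀ t, 0 ≤ t → t ≤ δ₀ → M (2*t) ≤ K * M t := by
  have hS0 : (0:ℝ) ∈ {a | ∀ᶠ t in 𝓝[>] (0:ℝ), a ≤ M t / M (2*t)} := by
    filter_upwards [self_mem_nhdsWithin] with t ht
    have ht' : 0 < t := ht
    exact div_nonneg (orlicz_nonneg hM ht'.le) (orlicz_nonneg hM (by linarith))
  have hΔ' := hΔ
  rw [Delta2Zero, Filter.liminf_eq] at hΔ'
  obtain ⟨a, ha, ha0⟩ := exists_lt_of_lt_csSup ⟨0, hS0⟩ hΔ'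
  simp only [Set.mem_setOf_eq] at ha
  rw [eventually_nhdsWithin_iff, Metric.eventually_nhds_iff] at ha
  obtain ⟨δ, hδ, hδa⟩ := ha
  refine ⟨max (1/a) 1, δ/2, le_max_right _ _, by positivity, fun t ht0 htδ => ?_⟩
  rcases eq_or_lt_of_le ht0 with h | h
  · simp [← h, hM.map_zero]
  · have h2t : 0 < M (2*t) := hnd _ (by positivity)
    have hat : a ≤ M t / M (2*t) :=
      hδa (by simp [Real.dist_eq, abs_of_pos h]; linarith) (Set.mem_Ioi.mpr h)
    have : a * M (2*t) ≤ M t := (le_div_iff₀ h2t).mp hat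
    have h1a : M (2*t) ≤ (1/a) * M t := by
      rw [div_mul_eq_mul_div, le_div_iff₀ ha0]
      linarith [this]
    calc M (2*t) ≤ (1/a) * M t := h1a
      _ ≤ max (1/a) 1 * M t :=
        mul_le_mul_of_nonneg_right (le_max_left _ _) (orlicz_nonneg hM ht0)

lemma orlicz_iter (hM : IsOrliczFunction M) {K δ₀ : ℝ} (hK : 1 ≤ K) (hδ₀ : 0 < δ₀)
    (hdbl : ∀ t, 0 ≤ t → t ≤ δ₀ → M (2*t) ≤ K * M t) :
    ∀ k : ℕ, ∀ t, 0 ≤ t → 2^k * t ≤ 2*δ₀ → M (2^k * t) ≤ K^k * M t := by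
  intro k
  induction k with
  | zero => intro t ht _; simp
  | succ k ih =>
    intro t ht hle
    have h2k : (0:ℝ) < 2^k := by positivity
    have hkt : 2^k * t ≤ δ₀ := by
      have : (2:ℝ)^(k+1) * t = 2 * (2^k * t) := by ring
      nlinarith [this ▸ hle]
    have h1 : M (2^(k+1) * t) = M (2 * (2^k * t)) := by ring_nf
    have h2 : M (2 * (2^k * t)) ≤ K * M (2^k * t) := hdbl _ (by positivity) hkt
    have h3 : M (2^k * t) ≤ K^k * M t := ih t ht (by linarith)
    calc M (2^(k+1) * t) ≤ K * M (2^k * t) := h1 ▸ h2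
      _ ≤ K * (K^k * M t) := mul_le_mul_of_nonneg_left h3 (by linarith)
      _ = K^(k+1) * M t := by ring

lemma orlicz_scaling (hM : IsOrliczFunction M) (hnd : ∀ t > (0:ℝ), 0 < M t)
    (hΔ : Delta2Zero M) {ρ : ℝ} (hρ : 0 < ρ) :
    ∃ C θ : ℝ, 1 ≤ C ∧ 0 < θ ∧ ∀ t, 0 ≤ t → t ≤ θ → M (t / ρ) ≤ C * M t := by
  obtain ⟨K, δ₀, hK, hδ₀, hdbl⟩ := orlicz_doubling hM hnd hΔ
  obtain ⟨k, hk⟩ := pow_unbounded_of_one_lt (1/ρ) (one_lt_two (α := ℝ))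
  refine ⟨K^k, 2*δ₀/2^k, by calc (1:ℝ) = 1^k := (one_pow k).symm
    _ ≤ K^k := pow_le_pow_left₀ zero_le_one hK k, by positivity, fun t ht htθ => ?_⟩
  have h1 : t / ρ ≤ 2^k * t := by
    rw [div_eq_mul_inv, mul_comm]
    exact mul_le_mul_of_nonneg_right (by rw [← one_div]; exact hk.le) ht
  have h2 : M (t/ρ) ≤ M (2^k * t) :=
    hM.monotoneOn (by positivity : (0:ℝ) ≤ t/ρ) (by positivity : (0:ℝ) ≤ 2^k*t) h1
  have h3 : M (2^k * t) ≤ K^k * M t := by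
    apply orlicz_iter hM hK hδ₀ hdbl
    · exact ht
    · calc (2:ℝ)^k * t ≤ 2^k * (2*δ₀/2^k) := by
            exact mul_le_mul_of_nonneg_left htθ (by positivity)
        _ = 2*δ₀ := by field_simp
  linarith

end Aux

section Aux2
variable {M : ℝ → ℝ}

lemma summable_head (f : ℕ → ℝ) (N : ℕ) : Summable (fun n => if n < N then f n else 0) :=
  summable_of_ne_finset_zero (s := Finset.range N)
    (fun n hn => by simp [Finset.mem_range] at hn; simp [hn])

lemma summable_tailite {f : ℕ → ℝ} (hf : Summable f) (N : ℕ) :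
    Summable (fun n => if N ≤ n then f n else 0) := by
  have := hf.sub (summable_head f N)
  apply this.congr
  intro n
  by_cases h : N ≤ n
  · simp [h, Nat.not_lt.mpr h]
  · simp [h, Nat.lt_of_not_le h]

lemma tsum_split {f : ℕ → ℝ} (hf : Summable f) (N : ℕ) :
    ∑' n, f n = (∑ i ∈ Finset.range N, f i) + ∑' n, (if N ≤ n then f n else 0) := by
  have h1 : ∑' n, (if n < N then f n else 0) = ∑ i ∈ Finset.range N, f i := by
    rw [tsum_eq_sum (s := Finset.range N)
      (fun n hn => by simp [Finset.mem_range] at hn; simp [hn])]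
    apply Finset.sum_congr rfl
    intro i hi
    simp [Finset.mem_range.mp hi]
  have h2 : ∀ n, f n = (if n < N then f n else 0) + (if N ≤ n then f n else 0) := by
    intro n
    by_cases h : N ≤ n
    · simp [h, Nat.not_lt.mpr h]
    · simp [h, Nat.lt_of_not_le h]
  calc ∑' n, f n = ∑' n, ((if n < N then f n else 0) + (if N ≤ n then f n else 0)) :=
        tsum_congr h2
    _ = (∑' n, (if n < N then f n else 0)) + ∑' n, (if N ≤ n then f n else 0) :=
        Summable.tsum_add (summable_head f N) (summable_tailite hf N)
    _ = _ := by rw [h1]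

lemma tsum_ite_mul (f : ℕ → ℝ) (N : ℕ) (c : ℝ) :
    ∑' n, (if N ≤ n then c else 0) * f n = c * ∑' n, (if N ≤ n then f n else 0) := by
  rw [← tsum_mul_left]
  apply tsum_congr
  intro n
  by_cases h : N ≤ n <;> simp [h]

lemma mem_summable (hM : IsOrliczFunction M) (hnd : ∀ t > (0:ℝ), 0 < M t)
    (hΔ : Delta2Zero M) {x : ℕ → ℝ} (hx : MemLM M x) :
    Summable (fun n => M |x n|) := by
  obtain ⟨-, ρ, hρ, hfin⟩ := hx
  have habs : ∀ n, |x n / ρ| = |x n| / ρ := by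
    intro n; rw [abs_div, abs_of_pos hρ]
  have hsum : Summable fun n => M (|x n| / ρ) := by
    have h := ENNReal.summable_toReal hfin
    apply h.congr
    intro n
    rw [ENNReal.toReal_ofReal (orlicz_nonneg hM (abs_nonneg _)), habs]
  -- scaling for ρ' = 1/ρ : M (s / (1/ρ)) = M (s * ρ) ≤ C M s for s small
  obtain ⟨C, θ, hC, hθ, hscale⟩ := orlicz_scaling hM hnd hΔ (one_div_pos.mpr hρ)
  -- terms tend to 0, hence |x n|/ρ ≤ θ eventually
  have htend : Filter.Tendsto (fun n => M (|x n| / ρ)) Filter.atTop (nhds 0) :=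
    hsum.tendsto_atTop_zero
  have hev : ∀ᶠ n in Filter.atTop, M (|x n| / ρ) < M θ :=
    htend.eventually (gt_mem_nhds (hnd θ hθ))
  obtain ⟨N, hN⟩ := hev.exists_forall_of_atTop
  rw [← summable_nat_add_iff N]
  have hle : ∀ n : ℕ, M |x (n + N)| ≤ C * M (|x (n + N)| / ρ) := by
    intro n
    have hsmall : |x (n + N)| / ρ ≤ θ := by
      by_contra hcon
      push_neg at hcon
      have := hM.monotoneOn (le_of_lt hθ) (by positivity : (0:ℝ) ≤ |x (n+N)|/ρ) hcon.le
      exact absurd (hN (n + N) (Nat.le_add_left N n)) (not_lt.mpr this)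
    have := hscale (|x (n + N)| / ρ) (by positivity) hsmall
    have heq : |x (n + N)| / ρ / (1/ρ) = |x (n + N)| := by field_simp
    rwa [heq] at this
  apply Summable.of_nonneg_of_le (fun n => orlicz_nonneg hM (abs_nonneg _)) hle
  exact ((summable_nat_add_iff N).mpr hsum).mul_left C

lemma mem_of_summable (hM : IsOrliczFunction M) {x : ℕ → ℝ} (hb : ∃ A, ∀ n, |x n| ≤ A)
    (hs : Summable fun n => M |x n|) : MemLM M x := by
  refine ⟨hb, 1, one_pos, ?_⟩
  have : sigmaM M (fun n => x n / 1) = ENNReal.ofReal (∑' n, M |x n|) := by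
    rw [ENNReal.ofReal_tsum_of_nonneg (fun n => orlicz_nonneg hM (abs_nonneg _)) hs]
    simp [sigmaM]
  rw [this]
  exact ENNReal.ofReal_ne_top

lemma luxNorm_lt (hM : IsOrliczFunction M) (hnd : ∀ t > (0:ℝ), 0 < M t)
    (hΔ : Delta2Zero M) {δ : ℝ} (hδ : 0 < δ) :
    ∃ η > 0, ∀ y : ℕ → ℝ, Summable (fun n => M |y n|) → (∑' n, M |y n|) ≤ η →
      luxNorm M y < δ := by
  obtain ⟨C, θ, hC, hθ, hscale⟩ := orlicz_scaling hM hnd hΔ (show (0:ℝ) < δ/2 by linarith)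
  have hMθ : 0 < M θ := hnd θ hθ
  refine ⟨min (1/C) (M θ / 2), by positivity, fun y hsum hle => ?_⟩
  have hcoord : ∀ n, |y n| ≤ θ := by
    intro n
    by_contra hcon
    push_neg at hcon
    have h1 : M θ ≤ M |y n| := hM.monotoneOn (Set.mem_Ici.mpr hθ.le) (Set.mem_Ici.mpr (abs_nonneg _)) hcon.le
    have h2 : M |y n| ≤ ∑' n, M |y n| :=
      Summable.le_tsum hsum n (fun j _ => orlicz_nonneg hM (abs_nonneg _))
    have := le_trans hle (min_le_right (1/C) (M θ / 2))
    linarith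
  have hptw : ∀ n, M (|y n| / (δ/2)) ≤ C * M |y n| :=
    fun n => hscale _ (abs_nonneg _) (hcoord n)
  have hsum2 : Summable (fun n => M (|y n| / (δ/2))) := by
    apply Summable.of_nonneg_of_le (fun n => orlicz_nonneg hM (by positivity)) hptw
      (hsum.mul_left C)
  have hts : (∑' n, M (|y n| / (δ/2))) ≤ 1 := by
    calc (∑' n, M (|y n| / (δ/2))) ≤ ∑' n, C * M |y n| :=
          Summable.tsum_le_tsum hptw hsum2 (hsum.mul_left C)
      _ = C * ∑' n, M |y n| := tsum_mul_left
      _ ≤ C * (1/C) := by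
          apply mul_le_mul_of_nonneg_left (le_trans hle (min_le_left _ _)) (by linarith)
      _ = 1 := by field_simp
  have hmem : (δ/2) ∈ {ρ : ℝ | 0 < ρ ∧ sigmaM M (fun n => y n / ρ) ≤ 1} := by
    constructor
    · linarith
    · have habs : ∀ n, |y n / (δ/2)| = |y n| / (δ/2) := by
        intro n; rw [abs_div, abs_of_pos (by linarith : (0:ℝ) < δ/2)]
      have : sigmaM M (fun n => y n / (δ/2)) = ENNReal.ofReal (∑' n, M (|y n| / (δ/2))) := by
        rw [ENNReal.ofReal_tsum_of_nonneg (fun n => orlicz_nonneg hM (by positivity)) hsum2]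
        unfold sigmaM
        exact tsum_congr fun n => by rw [habs]
      rw [this, ← ENNReal.ofReal_one]
      exact ENNReal.ofReal_le_ofReal hts
  have hbdd : BddBelow {ρ : ℝ | 0 < ρ ∧ sigmaM M (fun n => y n / ρ) ≤ 1} :=
    ⟨0, fun ρ hρ => hρ.1.le⟩
  calc luxNorm M y ≤ δ/2 := csInf_le hbdd hmem
    _ < δ := by linarith

end Aux2

section Aux3
variable {M : ℝ → ℝ}

lemma gA_summable (hM : IsOrliczFunction M) {a x : ℕ → ℝ} {c : ℝ}
    (h0 : ∀ n, 0 ≤ a n) (hc : ∀ n, a n ≤ c) (hx : Summable fun n => M |x n|) :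
    Summable fun n => a n * M |x n| := by
  apply Summable.of_nonneg_of_le
    (fun n => mul_nonneg (h0 n) (orlicz_nonneg hM (abs_nonneg _)))
    (fun n => mul_le_mul_of_nonneg_right (hc n) (orlicz_nonneg hM (abs_nonneg _)))
    (hx.mul_left c)

lemma gA_nonneg (hM : IsOrliczFunction M) {a x : ℕ → ℝ} (h0 : ∀ n, 0 ≤ a n) :
    0 ≤ gA M a x :=
  tsum_nonneg (fun n => mul_nonneg (h0 n) (orlicz_nonneg hM (abs_nonneg _)))

lemma gA_le_mul (hM : IsOrliczFunction M) {a x : ℕ → ℝ} {c : ℝ}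
    (h0 : ∀ n, 0 ≤ a n) (hc : ∀ n, a n ≤ c) (hx : Summable fun n => M |x n|) :
    gA M a x ≤ c * ∑' n, M |x n| := by
  calc gA M a x ≤ ∑' n, c * M |x n| :=
        Summable.tsum_le_tsum (fun n => mul_le_mul_of_nonneg_right (hc n)
          (orlicz_nonneg hM (abs_nonneg _))) (gA_summable hM h0 hc hx) (hx.mul_left c)
    _ = c * ∑' n, M |x n| := tsum_mul_left

lemma gA_mono (hM : IsOrliczFunction M) {a b x : ℕ → ℝ} {c : ℝ}
    (h0 : ∀ n, 0 ≤ a n) (hab : ∀ n, a n ≤ b n) (hbc : ∀ n, b n ≤ c)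
    (hx : Summable fun n => M |x n|) : gA M a x ≤ gA M b x :=
  Summable.tsum_le_tsum (fun n => mul_le_mul_of_nonneg_right (hab n) (orlicz_nonneg hM (abs_nonneg _)))
    (gA_summable hM h0 (fun n => le_trans (hab n) (hbc n)) hx)
    (gA_summable hM (fun n => le_trans (h0 n) (hab n)) hbc hx)

lemma gA_sub (hM : IsOrliczFunction M) {a b x : ℕ → ℝ} {c : ℝ}
    (h0 : ∀ n, 0 ≤ a n) (hac : ∀ n, a n ≤ c) (hd0 : ∀ n, 0 ≤ b n - a n)
    (hdc : ∀ n, b n - a n ≤ c) (hx : Summable fun n => M |x n|) :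
    gA M b x = gA M a x + ∑' n, (b n - a n) * M |x n| := by
  unfold gA
  rw [← Summable.tsum_add (gA_summable hM h0 hac hx) (gA_summable hM hd0 hdc hx)]
  exact tsum_congr fun n => by ring

lemma orlicz_two (hM : IsOrliczFunction M) {K δ₀ : ℝ} (hK : 1 ≤ K)
    (hdbl : ∀ t, 0 ≤ t → t ≤ δ₀ → M (2*t) ≤ K * M t) {u v : ℝ}
    (hu : |u| ≤ δ₀) (hv : |v| ≤ δ₀) : M |u - v| ≤ K * (M |u| + M |v|) := by
  set s := max |u| |v| with hs
  have hs0 : 0 ≤ s := le_trans (abs_nonneg u) (le_max_left _ _)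
  have hsδ : s ≤ δ₀ := max_le hu hv
  have h1 : |u - v| ≤ 2 * s := by
    calc |u - v| ≤ |u| + |v| := abs_sub _ _
      _ ≤ s + s := add_le_add (le_max_left _ _) (le_max_right _ _)
      _ = 2 * s := by ring
  have h2 : M |u - v| ≤ M (2 * s) :=
    hM.monotoneOn (Set.mem_Ici.mpr (abs_nonneg _)) (Set.mem_Ici.mpr (by linarith)) h1
  have h3 : M (2 * s) ≤ K * M s := hdbl s hs0 hsδ
  have h4 : M s ≤ M |u| + M |v| := by
    rcases max_cases |u| |v| with ⟨h, -⟩ | ⟨h, -⟩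
    · rw [hs, h]; linarith [orlicz_nonneg hM (abs_nonneg v)]
    · rw [hs, h]; linarith [orlicz_nonneg hM (abs_nonneg u)]
  calc M |u - v| ≤ K * M s := le_trans h2 h3
    _ ≤ K * (M |u| + M |v|) := mul_le_mul_of_nonneg_left h4 (by linarith)

lemma exists_chain (Mem : (ℕ → ℝ) → Prop) (F : (ℕ → ℝ) → (ℕ → ℝ) → EReal)
    (TSf : (ℕ → ℝ) → ℕ → ℝ) (δ μ η : ℕ → ℝ) (ε : ℝ)
    (Good : ℕ → (ℕ → ℝ) → Prop)
    (hGood0 : Good 0 (fun _ => ε/2))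
    (hGoodStep : ∀ k a N, Good k a → Good (k+1) (fun n => a n + if N ≤ n then δ k else 0))
    (step : ∀ k a, Good k a → ∃ p : (ℕ → ℝ) × ℕ, Mem p.1 ∧
      (∀ y, Mem y → F a p.1 ≤ F a y + ((μ k : ℝ) : EReal)) ∧ TSf p.1 p.2 ≤ η k) :
    ∃ (A X : ℕ → ℕ → ℝ) (NN : ℕ → ℕ),
      A 0 = (fun _ => ε/2) ∧
      (∀ k, A (k+1) = fun n => A k n + if NN k ≤ n then δ k else 0) ∧
      (∀ k, Good k (A k)) ∧
      (∀ k, Mem (X k) ∧ (∀ y, Mem y → F (A k) (X k) ≤ F (A k) y + ((μ k : ℝ) : EReal)) ∧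
        TSf (X k) (NN k) ≤ η k) := by
  let chain : ∀ k : ℕ, {a : ℕ → ℝ // Good k a} := fun k =>
    Nat.rec ⟨fun _ => ε/2, hGood0⟩
      (fun k a => ⟨fun n => a.1 n + if (step k a.1 a.2).choose.2 ≤ n then δ k else 0,
        hGoodStep k a.1 (step k a.1 a.2).choose.2 a.2⟩) k
  refine ⟨fun k => (chain k).1, fun k => (step k (chain k).1 (chain k).2).choose.1,
    fun k => (step k (chain k).1 (chain k).2).choose.2, rfl, fun k => rfl, fun k => (chain k).2,
    fun k => (step k (chain k).1 (chain k).2).choose_spec⟩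

end Aux3

lemma gA_def (M : ℝ → ℝ) (a x : ℕ → ℝ) : gA M a x = ∑' n, a n * M |x n| := rfl

set_option maxHeartbeats 2000000 in
/-- Let `M` be a non-degenerate Orlicz function with `Δ₂` at zero and let
`f : ℓ_M → ℝ ∪ {+∞}` be proper, lower semicontinuous and bounded below on `ℓ_M`. Then for
every `ε > 0` there is a sequence `a` with `0 ≤ a_n < ε` for all `n` such that `f + g_a`
attains its minimum on `ℓ_M`. -/
theorem stmt12 (M : ℝ → ℝ) (hM : IsOrliczFunction M) (hnd : ∀ t > (0 : ℝ), 0 < M t)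
    (hΔ : Delta2Zero M)
    (f : (ℕ → ℝ) → EReal) (hbot : ∀ x, f x ≠ ⊥)
    (hproper : ∃ x, MemLM M x ∧ f x ≠ ⊤)
    (hlsc : ∀ x, MemLM M x → ∀ c : EReal, c < f x → ∃ δ > (0 : ℝ), ∀ y, MemLM M y →
      luxNorm M (fun n => y n - x n) < δ → c < f y)
    (hbdd : ∃ m : ℝ, ∀ x, MemLM M x → (m : EReal) ≤ f x) :
    ∀ ε > (0 : ℝ), ∃ a : ℕ → ℝ, (∀ n, 0 ≤ a n ∧ a n < ε) ∧
      ∃ xbar, MemLM M xbar ∧ ∀ x, MemLM M x →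
        f xbar + ((gA M a xbar : ℝ) : EReal) ≤ f x + ((gA M a x : ℝ) : EReal) := by
  intro ε hε
  obtain ⟨x0, hx0m, hx0t⟩ := hproper
  obtain ⟨m, hm⟩ := hbdd
  have hMsum : ∀ x, MemLM M x → Summable fun n => M |x n| :=
    fun x hx => mem_summable hM hnd hΔ hx
  have hMnn : ∀ t : ℝ, 0 ≤ M |t| := fun t => orlicz_nonneg hM (abs_nonneg t)
  -- the function F and tail functional
  obtain ⟨F, hFdef⟩ : ∃ F : (ℕ → ℝ) → (ℕ → ℝ) → EReal,
      F = fun a x => f x + ((gA M a x : ℝ) : EReal) := ⟨_, rfl⟩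
  obtain ⟨TSf, hTSdef⟩ : ∃ TSf : (ℕ → ℝ) → ℕ → ℝ,
      TSf = fun x N => ∑' n, if N ≤ n then M |x n| else 0 := ⟨_, rfl⟩
  obtain ⟨sg, hsgdef⟩ : ∃ sg : (ℕ → ℝ) → ℝ, sg = fun x => ∑' n, M |x n| := ⟨_, rfl⟩
  have hsgnn : ∀ x, 0 ≤ sg x := fun x => by rw [hsgdef]; exact tsum_nonneg fun n => hMnn _
  -- doubling data
  obtain ⟨K, δ₀, hK, hδ₀, hdbl⟩ := orlicz_doubling hM hnd hΔ
  have hMδ₀ : 0 < M δ₀ := hnd δ₀ hδ₀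
  obtain ⟨η₀, hη₀def⟩ : ∃ η₀ : ℝ, η₀ = min (M δ₀) 1 / 8 := ⟨_, rfl⟩
  have hη₀ : 0 < η₀ := by rw [hη₀def]; have := lt_min hMδ₀ one_pos; positivity
  have hη₀M : 8 * η₀ ≤ M δ₀ := by rw [hη₀def]; have := min_le_left (M δ₀) 1; linarith
  have hη₀1 : 8 * η₀ ≤ 1 := by rw [hη₀def]; have := min_le_right (M δ₀) 1; linarith
  -- value at x0
  obtain ⟨r0, hfx0⟩ : ∃ r0 : ℝ, f x0 = (r0 : EReal) :=
    ⟨(f x0).toReal, (EReal.coe_toReal hx0t (hbot x0)).symm⟩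
  have hσ₀sum : Summable fun n => M |x0 n| := hMsum x0 hx0m
  obtain ⟨σ₀, hσ₀def⟩ : ∃ σ₀ : ℝ, σ₀ = sg x0 := ⟨_, rfl⟩
  have hσ₀0 : 0 ≤ σ₀ := hσ₀def ▸ hsgnn x0
  obtain ⟨B, hBdef⟩ : ∃ B : ℝ, B = 2/ε * (|r0| + ε*σ₀ + ε + |m|) + 1 := ⟨_, rfl⟩
  have hB1 : 1 ≤ B := by
    rw [hBdef]
    have h1 : 0 ≤ |r0| := abs_nonneg r0
    have h2 : 0 ≤ |m| := abs_nonneg m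
    have : 0 ≤ 2/ε * (|r0| + ε*σ₀ + ε + |m|) := by positivity
    linarith
  have hB0 : 0 < B := lt_of_lt_of_le one_pos hB1
  -- the decreasing scale sequence δs
  obtain ⟨rr, hrrdef⟩ : ∃ rr : ℕ → ℝ, rr = fun k => min (1/2) (η₀ * (1/2)^(k+2) / (B+1)) :=
    ⟨_, rfl⟩
  have hrrpos : ∀ k, 0 < rr k := by
    intro k; rw [hrrdef]
    exact lt_min (by norm_num) (by positivity)
  have hrrhalf : ∀ k, rr k ≤ 1/2 := fun k => by rw [hrrdef]; exact min_le_left _ _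
  have hrrB : ∀ k, rr k * (B+1) ≤ η₀ * (1/2)^(k+2) := by
    intro k
    have h := min_le_right (1/2 : ℝ) (η₀ * (1/2)^(k+2) / (B+1))
    rw [hrrdef]
    calc min (1/2) (η₀ * (1/2)^(k+2) / (B+1)) * (B+1)
        ≤ (η₀ * (1/2)^(k+2) / (B+1)) * (B+1) :=
          mul_le_mul_of_nonneg_right h (by linarith)
      _ = η₀ * (1/2)^(k+2) := div_mul_cancel₀ _ (by linarith)
  obtain ⟨δs, hδs0, hδsrec⟩ : ∃ δs : ℕ → ℝ, δs 0 = ε/8 ∧ ∀ k, δs (k+1) = δs k * rr k :=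
    ⟨fun k => Nat.rec (ε/8) (fun k d => d * rr k) k, rfl, fun k => rfl⟩
  have hδpos : ∀ k, 0 < δs k := by
    intro k; induction k with
    | zero => rw [hδs0]; linarith
    | succ k ih => rw [hδsrec]; exact mul_pos ih (hrrpos k)
  have hδhalf : ∀ k, 2 * δs (k+1) ≤ δs k := by
    intro k; rw [hδsrec]
    have := mul_le_mul_of_nonneg_left (hrrhalf k) (hδpos k).le
    linarith
  have hδmono : ∀ k j, k ≤ j → δs j ≤ δs k := by
    intro k j hkj
    induction j, hkj using Nat.le_induction with
    | base => exact le_refl _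
    | succ j hkj ih => exact le_trans (by linarith [hδhalf j, hδpos (j+1)]) ih
  have hδB : ∀ k, δs (k+1) * (B+1) ≤ δs k * (η₀ * (1/2)^(k+2)) := by
    intro k
    rw [hδsrec, mul_assoc]
    exact mul_le_mul_of_nonneg_left (hrrB k) (hδpos k).le
  have hδgeo : ∀ k i, δs (k+i) ≤ δs k * (1/2)^i := by
    intro k i
    induction i with
    | zero => simp
    | succ i ih =>
      have h1 : δs (k+(i+1)) = δs (k+i) * rr (k+i) := hδsrec (k+i)
      have hp : ((1:ℝ)/2)^(i+1) = (1/2)^i * (1/2) := pow_succ _ i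
      rw [h1, hp]
      nlinarith [hδpos (k+i), hrrpos (k+i), hrrhalf (k+i),
        (by positivity : (0:ℝ) < (1/2:ℝ)^i), ih]
  have hδIcoKey : ∀ k d, (∑ i ∈ Finset.Ico k (k+d), δs i) + 2 * δs (k+d) ≤ 2 * δs k := by
    intro k d
    induction d with
    | zero => simp
    | succ d ih =>
      show (∑ i ∈ Finset.Ico k ((k+d)+1), δs i) + 2 * δs ((k+d)+1) ≤ 2 * δs k
      rw [Finset.sum_Ico_succ_top (Nat.le_add_right k d)]
      have := hδhalf (k+d)
      linarith
  have hδIco : ∀ k j, (∑ i ∈ Finset.Ico k j, δs i) ≤ 2 * δs k := by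
    intro k j
    rcases le_or_gt k j with h | h
    · obtain ⟨d, rfl⟩ := Nat.exists_eq_add_of_le h
      linarith [hδIcoKey k d, hδpos (k+d)]
    · rw [Finset.Ico_eq_empty (by omega)]
      simp [le_of_lt (hδpos k), (hδpos k).le]
  have hδtailsum : ∀ k, Summable (fun i => δs (i + k)) := by
    intro k
    have hgeo2 : Summable (fun i : ℕ => δs k * (1/2:ℝ)^i) :=
      (summable_geometric_of_lt_one (r := (1:ℝ)/2) (by norm_num) (by norm_num)).mul_left (δs k)
    refine Summable.of_nonneg_of_le (fun i => (hδpos _).le) (fun i => ?_) hgeo2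
    have := hδgeo k i
    rwa [Nat.add_comm k i] at this
  have hδtail : ∀ k, (∑' i, δs (i + k)) ≤ 2 * δs k := by
    intro k
    calc (∑' i, δs (i + k)) ≤ ∑' i, δs k * (1/2)^i :=
          Summable.tsum_le_tsum (fun i => by have := hδgeo k i; rwa [Nat.add_comm k i] at this) (hδtailsum k)
            ((summable_geometric_of_lt_one (by norm_num) (by norm_num)).mul_left (δs k))
      _ = δs k * (1 - 1/2)⁻¹ := by
          rw [tsum_mul_left, tsum_geometric_of_lt_one (r := (1/2:ℝ)) (by norm_num) (by norm_num)]
      _ = 2 * δs k := by ring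
  have hδsummable : Summable δs := by
    have := hδtailsum 0
    apply this.congr; intro i; rw [Nat.add_zero]
  -- μ and η
  obtain ⟨μs, hμdef⟩ : ∃ μs : ℕ → ℝ, μs = fun k => δs k * (η₀ * (1/2)^k) := ⟨_, rfl⟩
  obtain ⟨ηs, hηdef⟩ : ∃ ηs : ℕ → ℝ, ηs = fun k => η₀ * (1/2)^k := ⟨_, rfl⟩
  have hμpos : ∀ k, 0 < μs k := by
    intro k; rw [hμdef]; have := hδpos k; positivity
  have hηpos : ∀ k, 0 < ηs k := by intro k; rw [hηdef]; positivity
  have hpowle1 : ∀ k : ℕ, ((1:ℝ)/2)^k ≤ 1 := fun k =>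
    pow_le_one₀ (by norm_num) (by norm_num)
  have hμle : ∀ k, μs k ≤ ε := by
    intro k
    rw [hμdef]
    have h1 : δs k ≤ ε/8 := hδs0 ▸ hδmono 0 k (Nat.zero_le k)
    have h2 : η₀ * (1/2)^k ≤ 1 := by nlinarith [hpowle1 k, (by positivity : (0:ℝ) < (1/2:ℝ)^k)]
    nlinarith [hδpos k]
  -- Good invariant
  obtain ⟨Good, hGooddef⟩ : ∃ Good : ℕ → (ℕ → ℝ) → Prop,
      Good = fun k a => ∀ n, ε/2 ≤ a n ∧ a n ≤ ε/2 + ∑ i ∈ Finset.range k, δs i := ⟨_, rfl⟩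
  have hGoodbound : ∀ k a, Good k a → ∀ n, ε/2 ≤ a n ∧ a n ≤ 3/4*ε := by
    intro k a ha n
    rw [hGooddef] at ha
    refine ⟨(ha n).1, le_trans (ha n).2 ?_⟩
    have : (∑ i ∈ Finset.range k, δs i) ≤ 2 * δs 0 := by
      rw [Finset.range_eq_Ico]; exact hδIco 0 k
    rw [hδs0] at this; linarith
  have hGood0 : Good 0 (fun _ => ε/2) := by
    rw [hGooddef]; intro n; simp
  have hGoodStep : ∀ k a N, Good k a →
      Good (k+1) (fun n => a n + if N ≤ n then δs k else 0) := by
    intro k a N ha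
    rw [hGooddef] at ha ⊢
    intro n
    constructor
    · have : (0:ℝ) ≤ if N ≤ n then δs k else 0 := by
        split
        · exact (hδpos k).le
        · exact le_rfl
      linarith [(ha n).1]
    · rw [Finset.sum_range_succ]
      have : (if N ≤ n then δs k else 0) ≤ δs k := by
        split <;> simp [le_refl, (hδpos k).le]
      linarith [(ha n).2]
  -- basic TSf facts
  have hTSnn : ∀ x N, 0 ≤ TSf x N := by
    intro x N; rw [hTSdef]
    exact tsum_nonneg fun n => by by_cases h : N ≤ n <;> simp [h, hMnn]
  have hTSterm : ∀ (x : ℕ → ℝ), Summable (fun n => M |x n|) → ∀ N n, N ≤ n →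
      M |x n| ≤ TSf x N := by
    intro x hx N n hn
    rw [hTSdef]
    have := Summable.le_tsum (summable_tailite hx N) n
      (fun j _ => by by_cases h : N ≤ j <;> simp [h, hMnn])
    simpa [hn] using this
  have hTSexists : ∀ (x : ℕ → ℝ), Summable (fun n => M |x n|) → ∀ e, 0 < e →
      ∃ N, TSf x N ≤ e := by
    intro x hx e he
    have hts : ∀ N, TSf x N = (∑' n, M |x n|) - ∑ i ∈ Finset.range N, M |x i| := by
      intro N; rw [hTSdef]; rw [tsum_split hx N]; ring
    have htendsto : Filter.Tendsto (fun N => TSf x N) Filter.atTop (nhds 0) := by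
      have h2 := hx.hasSum.tendsto_sum_nat
      have : Filter.Tendsto (fun N => (∑' n, M |x n|) - ∑ i ∈ Finset.range N, M |x i|)
          Filter.atTop (nhds ((∑' n, M |x n|) - ∑' n, M |x n|)) :=
        Filter.Tendsto.sub tendsto_const_nhds h2
      rw [sub_self] at this
      exact this.congr fun N => (hts N).symm
    obtain ⟨N, hN⟩ := (htendsto.eventually (gt_mem_nhds he)).exists
    exact ⟨N, hN.le⟩
  -- the approximate-minimization step
  have hstep : ∀ k a, Good k a → ∃ p : (ℕ → ℝ) × ℕ, MemLM M p.1 ∧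
      (∀ y, MemLM M y → F a p.1 ≤ F a y + ((μs k : ℝ) : EReal)) ∧
      TSf p.1 p.2 ≤ ηs k := by
    intro k a ha
    have hb := hGoodbound k a ha
    have ha0 : ∀ n, 0 ≤ a n := fun n => le_trans (by linarith) (hb n).1
    have hgnn : ∀ y : ℕ → ℝ, 0 ≤ gA M a y := fun y => gA_nonneg hM ha0
    obtain ⟨S, hSdef⟩ : ∃ S : EReal, S = ⨅ y : {y : ℕ → ℝ // MemLM M y}, F a y.1 := ⟨_, rfl⟩
    have hFlow : ∀ y : {y : ℕ → ℝ // MemLM M y}, (m:EReal) ≤ F a y.1 := by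
      intro y
      rw [hFdef]
      calc (m:EReal) ≤ f y.1 := hm y.1 y.2
        _ ≤ f y.1 + ((gA M a y.1 : ℝ):EReal) :=
          le_add_of_nonneg_right (by exact_mod_cast hgnn y.1)
    have hSlow : (m:EReal) ≤ S := hSdef ▸ le_iInf hFlow
    have hSbot : S ≠ ⊥ := fun h => by
      rw [h] at hSlow; exact (EReal.bot_lt_coe m).not_ge hSlow
    have hSx0 : S ≤ ((r0 + gA M a x0 : ℝ) : EReal) := by
      have h1 : F a x0 = ((r0 + gA M a x0 : ℝ):EReal) := by
        rw [hFdef]; simp only []; rw [hfx0, EReal.coe_add]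
      rw [hSdef, ← h1]
      exact iInf_le _ (⟨x0, hx0m⟩ : {y // MemLM M y})
    have hStop : S ≠ ⊤ := by
      intro h; rw [h] at hSx0; exact (EReal.coe_lt_top _).not_ge hSx0
    obtain ⟨s, hs⟩ : ∃ s : ℝ, S = (s : EReal) :=
      ⟨S.toReal, (EReal.coe_toReal hStop hSbot).symm⟩
    have hSlt : S < S + ((μs k : ℝ) : EReal) := by
      rw [hs, ← EReal.coe_add]
      exact_mod_cast lt_add_of_pos_right _ (hμpos k)
    rw [hSdef] at hSlt
    obtain ⟨x, hxlt⟩ := iInf_lt_iff.mp hSlt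
    rw [← hSdef] at hxlt
    obtain ⟨N, hN⟩ := hTSexists x.1 (hMsum x.1 x.2) (ηs k) (hηpos k)
    refine ⟨(x.1, N), x.2, fun y hy => ?_, hN⟩
    calc F a x.1 ≤ S + ((μs k : ℝ) : EReal) := hxlt.le
      _ ≤ F a y + ((μs k : ℝ) : EReal) := by
          apply add_le_add_left
          rw [hSdef]
          exact iInf_le _ (⟨y, hy⟩ : {y // MemLM M y})
  obtain ⟨A, X, NN, hA0, hArec, hAGood, hXspec⟩ :=
    exists_chain (MemLM M) F TSf δs μs ηs ε Good hGood0 hGoodStep hstep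
  have hA05 : ∀ k n, ε/2 ≤ A k n := fun k n => by
    have h := hAGood k; rw [hGooddef] at h; exact (h n).1
  have hA34 : ∀ k n, A k n ≤ 3/4*ε := fun k n => (hGoodbound k _ (hAGood k) n).2
  have hA0le : ∀ k n, 0 ≤ A k n := fun k n => le_trans (by linarith) (hA05 k n)
  have hArecn : ∀ k n, A (k+1) n = A k n + (if NN k ≤ n then δs k else 0) :=
    fun k n => congrFun (hArec k) n
  have hAmono : ∀ k j, k ≤ j → ∀ n, A k n ≤ A j n := by
    intro k j hkj
    induction j, hkj using Nat.le_induction with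
    | base => intro n; exact le_rfl
    | succ j hkj ih =>
      intro n
      rw [hArecn j n]
      have : (0:ℝ) ≤ if NN j ≤ n then δs j else 0 := by
        split
        · exact (hδpos j).le
        · exact le_rfl
      linarith [ih n]
  have hAdiff : ∀ k j, k ≤ j → ∀ n, A j n ≤ A k n + ∑ i ∈ Finset.Ico k j, δs i := by
    intro k j hkj
    induction j, hkj using Nat.le_induction with
    | base => intro n; simp
    | succ j hkj ih =>
      intro n
      rw [hArecn j n, Finset.sum_Ico_succ_top hkj]
      have : (if NN j ≤ n then δs j else 0) ≤ δs j := by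
        split
        · exact le_rfl
        · exact (hδpos j).le
      linarith [ih n]
  have hXmem : ∀ k, MemLM M (X k) := fun k => (hXspec k).1
  have hXsum : ∀ k, Summable fun n => M |X k n| := fun k => hMsum _ (hXmem k)
  have hXmin : ∀ k y, MemLM M y → F (A k) (X k) ≤ F (A k) y + ((μs k:ℝ):EReal) :=
    fun k => (hXspec k).2.1
  have hXTS : ∀ k, TSf (X k) (NN k) ≤ ηs k := fun k => (hXspec k).2.2
  have hgA34 : ∀ k (y : ℕ → ℝ), Summable (fun n => M |y n|) → gA M (A k) y ≤ ε * sg y := by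
    intro k y hy
    have hynn : (0:ℝ) ≤ ∑' n, M |y n| := tsum_nonneg fun n => hMnn _
    rw [hsgdef]
    calc gA M (A k) y ≤ (3/4*ε) * ∑' n, M |y n| := gA_le_mul hM (hA0le k) (hA34 k) hy
      _ ≤ ε * ∑' n, M |y n| :=
          mul_le_mul_of_nonneg_right (by linarith) hynn
  have hfXfin : ∀ k, ∃ Rk : ℝ, f (X k) = (Rk : EReal) := by
    intro k
    have h1 := hXmin k x0 hx0m
    have h2 : F (A k) x0 + ((μs k:ℝ):EReal) = ((r0 + gA M (A k) x0 + μs k : ℝ):EReal) := by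
      rw [hFdef]; simp only []; rw [hfx0, ← EReal.coe_add, ← EReal.coe_add]
    rw [h2] at h1
    have h3 : f (X k) ≤ F (A k) (X k) := by
      rw [hFdef]
      exact le_add_of_nonneg_right (by exact_mod_cast gA_nonneg hM (hA0le k))
    have h4 : f (X k) ≤ ((r0 + gA M (A k) x0 + μs k : ℝ):EReal) := le_trans h3 h1
    have h5 : f (X k) ≠ ⊤ := fun h => by
      rw [h] at h4; exact (EReal.coe_lt_top _).not_ge h4
    exact ⟨(f (X k)).toReal, (EReal.coe_toReal h5 (hbot _)).symm⟩
  choose R hfX using hfXfin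
  have hmR : ∀ k, m ≤ R k := fun k => by
    have h := hm (X k) (hXmem k); rw [hfX k] at h; exact_mod_cast h
  have hminreal : ∀ k (y : ℕ → ℝ), MemLM M y → ∀ ry : ℝ, f y = (ry : EReal) →
      R k + gA M (A k) (X k) ≤ ry + gA M (A k) y + μs k := by
    intro k y hy ry hryd
    have h1 := hXmin k y hy
    rw [hFdef] at h1; simp only [] at h1
    rw [hfX k, hryd, ← EReal.coe_add, ← EReal.coe_add, ← EReal.coe_add] at h1
    exact_mod_cast h1
  have hgXbound : ∀ k, gA M (A k) (X k) ≤ |r0| + ε*σ₀ + ε + |m| := by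
    intro k
    have h1 := hminreal k x0 hx0m r0 hfx0
    have h2 : gA M (A k) x0 ≤ ε * σ₀ := by rw [hσ₀def]; exact hgA34 k x0 hσ₀sum
    have h3 := hmR k
    have h4 := hμle k
    have hr0le : r0 ≤ |r0| := le_abs_self r0
    have hmle : -m ≤ |m| := neg_le_abs m
    linarith
  have hsgX : ∀ k, sg (X k) ≤ B := by
    intro k
    have h1 : (ε/2) * sg (X k) ≤ gA M (A k) (X k) := by
      rw [hsgdef, gA_def, ← tsum_mul_left]
      exact Summable.tsum_le_tsum (fun n => mul_le_mul_of_nonneg_right (hA05 k n) (hMnn _))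
        ((hXsum k).mul_left (ε/2)) (gA_summable hM (hA0le k) (hA34 k) (hXsum k))
    have h2 := hgXbound k
    rw [hBdef]
    have h3 : sg (X k) ≤ 2/ε * (|r0| + ε*σ₀ + ε + |m|) := by
      rw [div_mul_eq_mul_div, le_div_iff₀ hε]
      linarith
    linarith
  have hsplit : ∀ k (x : ℕ → ℝ), Summable (fun n => M |x n|) →
      gA M (A (k+1)) x = gA M (A k) x + δs k * TSf x (NN k) := by
    intro k x hx
    have hd : ∀ n, A (k+1) n - A k n = if NN k ≤ n then δs k else 0 := fun n => by
      rw [hArecn k n]; ring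
    have h1 := gA_sub hM (a := A k) (b := A (k+1)) (x := x) (c := 3/4*ε + δs k)
      (hA0le k) (fun n => le_trans (hA34 k n) (by linarith [hδpos k]))
      (fun n => by
        rw [hd n]; split
        · exact (hδpos k).le
        · exact le_rfl)
      (fun n => by
        rw [hd n]
        have h34 : (0:ℝ) ≤ 3/4*ε := by linarith
        split
        · linarith
        · linarith [hδpos k])
      hx
    rw [h1]
    congr 1
    have heq : ∀ n, (A (k+1) n - A k n) * M |x n| =
        (if NN k ≤ n then δs k else 0) * M |x n| := fun n => by rw [hd n]
    rw [tsum_congr heq, tsum_ite_mul, hTSdef]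
  have hTSall : ∀ k j, k ≤ j → TSf (X j) (NN k) ≤ 4*η₀*(1/2)^k := by
    intro k j hkj
    have hpk : (0:ℝ) < (1/2:ℝ)^k := by positivity
    rcases eq_or_lt_of_le hkj with rfl | hlt
    · calc TSf (X k) (NN k) ≤ ηs k := hXTS k
        _ ≤ 4*η₀*(1/2)^k := by
          rw [hηdef]
          exact mul_le_mul_of_nonneg_right (by linarith : η₀ ≤ 4*η₀) hpk.le
    · have hk1j : k + 1 ≤ j := hlt
      have h1 : gA M (A k) (X j) + δs k * TSf (X j) (NN k) ≤ gA M (A j) (X j) := by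
        rw [← hsplit k (X j) (hXsum j)]
        exact gA_mono hM (hA0le (k+1)) (fun n => hAmono (k+1) j hk1j n) (hA34 j) (hXsum j)
      have h2 : gA M (A j) (X k) ≤ gA M (A k) (X k) + δs k * ηs k + 2*δs (k+1)*B := by
        obtain ⟨c, hcdef⟩ : ∃ c : ℝ, c = ∑ i ∈ Finset.Ico (k+1) j, δs i := ⟨_, rfl⟩
        have hc0 : 0 ≤ c := hcdef ▸ Finset.sum_nonneg fun i _ => (hδpos i).le
        have hc2 : c ≤ 2 * δs (k+1) := hcdef ▸ hδIco (k+1) j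
        have hb1 : ∀ n, A j n ≤ A (k+1) n + c := fun n => hcdef ▸ hAdiff (k+1) j hk1j n
        have h3 : gA M (A j) (X k) ≤ gA M (fun n => A (k+1) n + c) (X k) :=
          gA_mono hM (c := 3/4*ε + c) (hA0le j) hb1
            (fun n => by linarith [hA34 (k+1) n]) (hXsum k)
        have h4 : gA M (fun n => A (k+1) n + c) (X k) =
            gA M (A (k+1)) (X k) + ∑' n, ((A (k+1) n + c) - A (k+1) n) * M |X k n| :=
          gA_sub hM (c := 3/4*ε + c) (hA0le (k+1))
            (fun n => by linarith [hA34 (k+1) n])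
            (fun n => by simp [hc0])
            (fun n => by
              have h34 : (0:ℝ) ≤ 3/4*ε := by linarith
              simp; linarith)
            (hXsum k)
        have h5 : (∑' n, ((A (k+1) n + c) - A (k+1) n) * M |X k n|) = c * sg (X k) := by
          rw [hsgdef, ← tsum_mul_left]
          exact tsum_congr fun n => by ring
        have h6 : c * sg (X k) ≤ 2*δs (k+1)*B :=
          mul_le_mul hc2 (hsgX k) (hsgnn (X k)) (by linarith [hδpos (k+1)])
        have h7 := hsplit k (X k) (hXsum k)
        have h8 : δs k * TSf (X k) (NN k) ≤ δs k * ηs k :=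
          mul_le_mul_of_nonneg_left (hXTS k) (hδpos k).le
        rw [h4, h5] at h3
        linarith only [h3, h6, h7, h8]
      have hm1 := hminreal j (X k) (hXmem k) (R k) (hfX k)
      have hm2 := hminreal k (X j) (hXmem j) (R j) (hfX j)
      have hkey : δs k * TSf (X j) (NN k) ≤ μs k + μs j + δs k * ηs k + 2*δs (k+1)*B := by
        linarith only [h1, h2, hm1, hm2]
      have e1 : μs k = δs k * (η₀ * (1/2)^k) := by rw [hμdef]
      have e2 : μs j ≤ δs k * (η₀ * (1/2)^k) := by
        rw [hμdef]
        have hd := hδmono k j hkj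
        have hp : ((1:ℝ)/2)^j ≤ (1/2)^k :=
          pow_le_pow_of_le_one (by norm_num) (by norm_num) hkj
        exact mul_le_mul hd (mul_le_mul_of_nonneg_left hp hη₀.le)
          (by positivity) (hδpos k).le
      have e3 : δs k * ηs k = δs k * (η₀ * (1/2)^k) := by rw [hηdef]
      have e4 : 2*δs (k+1)*B ≤ δs k * (η₀ * (1/2)^k) := by
        have hp2 : ((1:ℝ)/2)^(k+2) = (1/2)^k * (1/4) := by rw [pow_add]; norm_num
        have h := hδB k
        rw [hp2] at h
        have h9 : (0:ℝ) ≤ δs k * (η₀ * (1/2)^k) :=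
          mul_nonneg (hδpos k).le (by positivity)
        linarith only [h, hδpos (k+1), h9]
      have hfin : δs k * TSf (X j) (NN k) ≤ δs k * (4*η₀*(1/2)^k) := by
        have h10 : δs k * (4*η₀*(1/2)^k) = 4*(δs k * (η₀*(1/2)^k)) := by ring
        rw [h10]
        linarith only [hkey, e1, e2, e3, e4]
      exact (mul_le_mul_iff_right₀ (hδpos k)).mp hfin
  obtain ⟨τ, hτdef⟩ : ∃ τ : ℕ → ℝ, τ = fun k => 4*η₀*(1/2)^k := ⟨_, rfl⟩
  have hτpos : ∀ k, 0 < τ k := by intro k; rw [hτdef]; positivity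
  have hτM : ∀ k, τ k < M δ₀ := by
    intro k; rw [hτdef]
    have h1 : (4:ℝ)*η₀*(1/2)^k ≤ 4*η₀*1 :=
      mul_le_mul_of_nonneg_left (hpowle1 k) (by linarith : (0:ℝ) ≤ 4*η₀)
    linarith [hη₀M, hMδ₀]
  have hTSall' : ∀ k j, k ≤ j → TSf (X j) (NN k) ≤ τ k := by
    intro k j h; rw [hτdef]; exact hTSall k j h
  have hMXB : ∀ k n, M |X k n| ≤ B := by
    intro k n
    have h1 := Summable.le_tsum (hXsum k) n (fun j _ => hMnn _)
    calc M |X k n| ≤ ∑' i, M |X k i| := h1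
      _ = sg (X k) := by rw [hsgdef]
      _ ≤ B := hsgX k
  obtain ⟨Rb0, hRb0⟩ := (hM.tendsto_atTop.eventually_gt_atTop B).exists_forall_of_atTop
  obtain ⟨Rc, hRcdef⟩ : ∃ Rc : ℝ, Rc = max Rb0 0 := ⟨_, rfl⟩
  have hXRc : ∀ k n, |X k n| ≤ Rc := by
    intro k n
    by_contra hcon
    push_neg at hcon
    have h1 : Rb0 ≤ |X k n| :=
      le_of_lt (lt_of_le_of_lt (hRcdef ▸ le_max_left Rb0 0) hcon)
    exact absurd (hMXB k n) (not_le.mpr (hRb0 _ h1))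
  have hbox : ∀ k, X k ∈ Set.univ.pi (fun _ : ℕ => Set.Icc (-Rc) Rc) := by
    intro k n _
    exact Set.mem_Icc.mpr (abs_le.mp (hXRc k n))
  have hcompact : IsCompact (Set.univ.pi fun _ : ℕ => Set.Icc (-Rc) Rc) :=
    isCompact_univ_pi fun _ => isCompact_Icc
  obtain ⟨xb, hxbK, φ, hφ, hconv⟩ := hcompact.tendsto_subseq hbox
  have hpt : ∀ n, Filter.Tendsto (fun j => X (φ j) n) Filter.atTop (nhds (xb n)) :=
    fun n => tendsto_pi_nhds.mp hconv n
  have hφge : ∀ j, j ≤ φ j := fun j => hφ.le_apply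
  have hMabs : Continuous fun t : ℝ => M |t| :=
    hM.continuousOn.comp_continuous continuous_abs (fun t => Set.mem_Ici.mpr (abs_nonneg t))
  have hptM : ∀ n, Filter.Tendsto (fun j => M |X (φ j) n|) Filter.atTop (nhds (M |xb n|)) :=
    fun n => (hMabs.tendsto (xb n)).comp (hpt n)
  have hptd : ∀ n, Filter.Tendsto (fun j => M |X (φ j) n - xb n|) Filter.atTop (nhds 0) := by
    intro n
    have h1 : Filter.Tendsto (fun j => X (φ j) n - xb n) Filter.atTop (nhds 0) := by
      have h2 := (hpt n).sub (tendsto_const_nhds (x := xb n))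
      rwa [sub_self] at h2
    have h2 := (hMabs.tendsto 0).comp h1
    simpa [abs_zero, hM.map_zero, Function.comp_def] using h2
  have hxbB : ∀ s : Finset ℕ, (∑ n ∈ s, M |xb n|) ≤ B := by
    intro s
    have hlim : Filter.Tendsto (fun j => ∑ n ∈ s, M |X (φ j) n|) Filter.atTop
        (nhds (∑ n ∈ s, M |xb n|)) := tendsto_finset_sum s fun n _ => hptM n
    apply le_of_tendsto hlim
    filter_upwards with j
    calc (∑ n ∈ s, M |X (φ j) n|) ≤ ∑' n, M |X (φ j) n| :=
        Summable.sum_le_tsum s (fun n _ => hMnn _) (hXsum (φ j))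
      _ = sg (X (φ j)) := by rw [hsgdef]
      _ ≤ B := hsgX (φ j)
  have hxbsum : Summable (fun n => M |xb n|) := summable_of_sum_le (fun n => hMnn _) hxbB
  have hsgxb : sg xb ≤ B := by rw [hsgdef]; exact Summable.tsum_le_of_sum_le hxbsum hxbB
  have hxbmem : MemLM M xb := by
    apply mem_of_summable hM _ hxbsum
    refine ⟨Rc, fun n => ?_⟩
    have h := hxbK n (Set.mem_univ n)
    exact abs_le.mpr ⟨h.1, h.2⟩
  have hTSxb : ∀ k, TSf xb (NN k) ≤ τ k := by
    intro k
    rw [hTSdef]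
    apply Summable.tsum_le_of_sum_le (summable_tailite hxbsum _)
    intro s
    have hlim : Filter.Tendsto (fun j => ∑ n ∈ s, if NN k ≤ n then M |X (φ j) n| else 0)
        Filter.atTop (nhds (∑ n ∈ s, if NN k ≤ n then M |xb n| else 0)) := by
      apply tendsto_finset_sum
      intro n _
      by_cases h : NN k ≤ n
      · simpa [h] using hptM n
      · simpa [h] using tendsto_const_nhds (x := (0:ℝ))
    apply le_of_tendsto hlim
    filter_upwards [Filter.eventually_ge_atTop k] with j hj
    calc (∑ n ∈ s, if NN k ≤ n then M |X (φ j) n| else 0)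
        ≤ ∑' n, if NN k ≤ n then M |X (φ j) n| else 0 :=
          Summable.sum_le_tsum s (fun n _ => by by_cases h : NN k ≤ n <;> simp [h, hMnn])
            (summable_tailite (hXsum (φ j)) _)
      _ = TSf (X (φ j)) (NN k) := by rw [hTSdef]
      _ ≤ τ k := hTSall' k (φ j) (le_trans hj (hφge j))
  have hsmallX : ∀ k j, k ≤ j → ∀ n, NN k ≤ n → |X j n| ≤ δ₀ := by
    intro k j hkj n hn
    by_contra hcon
    push_neg at hcon
    have h1 : M δ₀ ≤ M |X j n| := hM.monotoneOn (Set.mem_Ici.mpr hδ₀.le)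
      (Set.mem_Ici.mpr (abs_nonneg _)) hcon.le
    have h2 := hTSterm (X j) (hXsum j) (NN k) n hn
    linarith [hTSall' k j hkj, hτM k]
  have hsmallxb : ∀ k n, NN k ≤ n → |xb n| ≤ δ₀ := by
    intro k n hn
    by_contra hcon
    push_neg at hcon
    have h1 : M δ₀ ≤ M |xb n| := hM.monotoneOn (Set.mem_Ici.mpr hδ₀.le)
      (Set.mem_Ici.mpr (abs_nonneg _)) hcon.le
    have h2 := hTSterm xb hxbsum (NN k) n hn
    linarith [hTSxb k, hτM k]
  have hdsum : ∀ j : ℕ, Summable (fun n => M |X (φ j) n - xb n|) := by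
    intro j
    rw [← summable_nat_add_iff (NN 0)]
    have hcomp : ∀ n : ℕ, M |X (φ j) (n + NN 0) - xb (n + NN 0)| ≤
        K * (M |X (φ j) (n + NN 0)| + M |xb (n + NN 0)|) := by
      intro n
      exact orlicz_two hM hK hdbl
        (hsmallX 0 (φ j) (Nat.zero_le _) _ (Nat.le_add_left _ _))
        (hsmallxb 0 _ (Nat.le_add_left _ _))
    apply Summable.of_nonneg_of_le (fun n => hMnn _) hcomp
    exact (((summable_nat_add_iff (NN 0)).mpr (hXsum (φ j))).add
      ((summable_nat_add_iff (NN 0)).mpr hxbsum)).mul_left K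
  have hTSd : ∀ k j, k ≤ j → (∑' n, if NN k ≤ n then M |X (φ j) n - xb n| else 0)
      ≤ K * (τ k + τ k) := by
    intro k j hkj
    have hsum1 : Summable (fun n => if NN k ≤ n then M |X (φ j) n - xb n| else 0) :=
      summable_tailite (hdsum j) _
    have hsum2 : Summable (fun n => K * ((if NN k ≤ n then M |X (φ j) n| else 0)
        + (if NN k ≤ n then M |xb n| else 0))) :=
      ((summable_tailite (hXsum (φ j)) _).add (summable_tailite hxbsum _)).mul_left K
    have hb : ∀ n, (if NN k ≤ n then M |X (φ j) n - xb n| else 0) ≤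
        K * ((if NN k ≤ n then M |X (φ j) n| else 0)
          + (if NN k ≤ n then M |xb n| else 0)) := by
      intro n
      by_cases h : NN k ≤ n
      · simp only [if_pos h]
        exact orlicz_two hM hK hdbl (hsmallX k (φ j) (le_trans hkj (hφge j)) n h)
          (hsmallxb k n h)
      · simp [h]
    calc (∑' n, if NN k ≤ n then M |X (φ j) n - xb n| else 0)
        ≤ ∑' n, K * ((if NN k ≤ n then M |X (φ j) n| else 0)
          + (if NN k ≤ n then M |xb n| else 0)) := Summable.tsum_le_tsum hb hsum1 hsum2
      _ = K * (TSf (X (φ j)) (NN k) + TSf xb (NN k)) := by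
          rw [tsum_mul_left, Summable.tsum_add (summable_tailite (hXsum (φ j)) _)
            (summable_tailite hxbsum _), hTSdef]
      _ ≤ K * (τ k + τ k) := by
          apply mul_le_mul_of_nonneg_left _ (by linarith : (0:ℝ) ≤ K)
          exact add_le_add (hTSall' k (φ j) (le_trans hkj (hφge j))) (hTSxb k)
  have hsgconv : ∀ ζ : ℝ, 0 < ζ →
      ∀ᶠ j in Filter.atTop, (∑' n, M |X (φ j) n - xb n|) ≤ ζ := by
    intro ζ hζ
    obtain ⟨k, hk⟩ : ∃ k, K * (τ k + τ k) ≤ ζ/2 := by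
      have htend : Filter.Tendsto (fun k => (8*K*η₀) * (1/2:ℝ)^k) Filter.atTop (nhds 0) := by
        have h := tendsto_pow_atTop_nhds_zero_of_lt_one
          (by norm_num : (0:ℝ) ≤ 1/2) (by norm_num : (1/2:ℝ) < 1)
        simpa using h.const_mul (8*K*η₀)
      obtain ⟨k, hk⟩ := (htend.eventually (gt_mem_nhds (by linarith : (0:ℝ) < ζ/2))).exists
      refine ⟨k, ?_⟩
      rw [hτdef]
      calc K * (4*η₀*(1/2)^k + 4*η₀*(1/2)^k) = (8*K*η₀)*(1/2)^k := by ring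
        _ ≤ ζ/2 := hk.le
    have hhead : Filter.Tendsto (fun j => ∑ n ∈ Finset.range (NN k), M |X (φ j) n - xb n|)
        Filter.atTop (nhds 0) := by
      have h := tendsto_finset_sum (Finset.range (NN k))
        (fun n (_ : n ∈ Finset.range (NN k)) => hptd n)
      simpa using h
    filter_upwards [hhead.eventually (gt_mem_nhds (by linarith : (0:ℝ) < ζ/2)),
      Filter.eventually_ge_atTop k] with j hj1 hj2
    have hsplitd := tsum_split (hdsum j) (NN k)
    rw [hsplitd]
    have h2 := hTSd k j hj2
    linarith only [hj1, h2, hk]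
  have hnorm : ∀ d : ℝ, 0 < d → ∀ᶠ j in Filter.atTop,
      luxNorm M (fun n => X (φ j) n - xb n) < d := by
    intro d hd
    obtain ⟨η, hη, hηlux⟩ := luxNorm_lt hM hnd hΔ hd
    filter_upwards [hsgconv η hη] with j hj
    exact hηlux _ (hdsum j) hj
  -- the final weight sequence aI
  have hitenn : ∀ n i, (0:ℝ) ≤ (if NN i ≤ n then δs i else 0) := fun n i => by
    split
    · exact (hδpos i).le
    · exact le_rfl
  have hitele : ∀ n i, (if NN i ≤ n then δs i else 0) ≤ δs i := fun n i => by
    split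
    · exact le_rfl
    · exact (hδpos i).le
  have hwsum : ∀ n, Summable (fun i => if NN i ≤ n then δs i else 0) := fun n =>
    Summable.of_nonneg_of_le (hitenn n) (hitele n) hδsummable
  obtain ⟨aI, haIdef⟩ : ∃ aI : ℕ → ℝ,
      aI = fun n => ε/2 + ∑' i, (if NN i ≤ n then δs i else 0) := ⟨_, rfl⟩
  have haIn : ∀ n, aI n = ε/2 + ∑' i, (if NN i ≤ n then δs i else 0) := fun n => by
    rw [haIdef]
  have hAform : ∀ k n, A k n = ε/2 + ∑ i ∈ Finset.range k, (if NN i ≤ n then δs i else 0) := by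
    intro k
    induction k with
    | zero => intro n; rw [congrFun hA0 n]; simp
    | succ k ih =>
      intro n
      rw [hArecn k n, ih n, Finset.sum_range_succ]
      ring
  have haIlow : ∀ k n, A k n ≤ aI n := by
    intro k n
    have h1 : (∑ i ∈ Finset.range k, if NN i ≤ n then δs i else 0) ≤
        ∑' i, (if NN i ≤ n then δs i else 0) :=
      Summable.sum_le_tsum _ (fun i _ => hitenn n i) (hwsum n)
    rw [haIn n, hAform k n]
    linarith only [h1]
  have haIpos : ∀ n, ε/2 ≤ aI n := by
    intro n
    rw [haIn n]
    linarith only [(tsum_nonneg (hitenn n) : (0:ℝ) ≤ ∑' i, (if NN i ≤ n then δs i else 0))]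
  have haI0 : ∀ n, 0 ≤ aI n := fun n => le_trans (by linarith) (haIpos n)
  have haIup : ∀ k n, aI n ≤ A k n + 2 * δs k := by
    intro k n
    rw [haIn n, hAform k n]
    have h1 : (∑ i ∈ Finset.range k, (if NN i ≤ n then δs i else 0)) +
        ∑' i, (if NN (i+k) ≤ n then δs (i+k) else 0) =
        ∑' i, (if NN i ≤ n then δs i else 0) := Summable.sum_add_tsum_nat_add k (hwsum n)
    have h2 : (∑' i, (if NN (i+k) ≤ n then δs (i+k) else 0)) ≤ ∑' i, δs (i+k) :=
      Summable.tsum_le_tsum (fun i => hitele n (i+k)) ((summable_nat_add_iff k).mpr (hwsum n))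
        (hδtailsum k)
    linarith only [h1, h2, hδtail k]
  have haIeps : ∀ n, 0 ≤ aI n ∧ aI n < ε := by
    intro n
    refine ⟨haI0 n, ?_⟩
    have h := haIup 0 n
    have hA0n : A 0 n = ε/2 := congrFun hA0 n
    rw [hA0n, hδs0] at h
    linarith only [h, hε]
  have haIub : ∀ n, aI n ≤ ε := fun n => (haIeps n).2.le
  refine ⟨aI, haIeps, xb, hxbmem, ?_⟩
  intro y hy
  by_cases hytop : f y = ⊤
  · rw [hytop, EReal.top_add_coe]
    exact le_top
  obtain ⟨ry, hryd⟩ : ∃ ry : ℝ, f y = (ry : EReal) :=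
    ⟨(f y).toReal, (EReal.coe_toReal hytop (hbot y)).symm⟩
  have hysum := hMsum y hy
  by_contra hcon
  push_neg at hcon
  rw [hryd, ← EReal.coe_add] at hcon
  obtain ⟨c, hc1, hc2⟩ := EReal.exists_between_coe_real hcon
  have hgap : ry + gA M aI y < c := by exact_mod_cast hc1
  obtain ⟨γ, hγdef⟩ : ∃ γ : ℝ, γ = (c - (ry + gA M aI y))/4 := ⟨_, rfl⟩
  have hγpos : 0 < γ := by rw [hγdef]; linarith only [hgap]
  have hlsc2 : ∃ d > (0:ℝ), ∀ z, MemLM M z → luxNorm M (fun n => z n - xb n) < d →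
      ((c - gA M aI xb : ℝ) : EReal) < f z := by
    apply hlsc xb hxbmem
    rcases eq_or_ne (f xb) ⊤ with h | h
    · rw [h]; exact EReal.coe_lt_top _
    · obtain ⟨rb, hrb⟩ : ∃ rb : ℝ, f xb = (rb:EReal) :=
        ⟨(f xb).toReal, (EReal.coe_toReal h (hbot xb)).symm⟩
      rw [hrb] at hc2 ⊢
      rw [← EReal.coe_add] at hc2
      have h9 : c < rb + gA M aI xb := by exact_mod_cast hc2
      exact_mod_cast (by linarith only [h9] : c - gA M aI xb < rb)
  obtain ⟨dl, hdl, hdlsc⟩ := hlsc2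
  have haIsummxb : Summable (fun n => aI n * M |xb n|) := gA_summable hM haI0 haIub hxbsum
  have hFatou : ∀ᶠ j in Filter.atTop, gA M aI xb - γ < gA M aI (X (φ j)) := by
    have hhs : Filter.Tendsto (fun s : Finset ℕ => ∑ n ∈ s, aI n * M |xb n|)
        Filter.atTop (nhds (gA M aI xb)) := by
      rw [gA_def]; exact haIsummxb.hasSum
    obtain ⟨s, hs⟩ := (hhs.eventually (lt_mem_nhds
      (show gA M aI xb - γ/2 < gA M aI xb by linarith only [hγpos]))).exists
    have hlim : Filter.Tendsto (fun j => ∑ n ∈ s, aI n * M |X (φ j) n|) Filter.atTop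
        (nhds (∑ n ∈ s, aI n * M |xb n|)) :=
      tendsto_finset_sum s fun n _ => (hptM n).const_mul (aI n)
    filter_upwards [hlim.eventually (lt_mem_nhds
      (show gA M aI xb - γ < ∑ n ∈ s, aI n * M |xb n| by linarith only [hs, hγpos]))] with j hj
    calc gA M aI xb - γ < ∑ n ∈ s, aI n * M |X (φ j) n| := hj
      _ ≤ gA M aI (X (φ j)) := by
          rw [gA_def]
          exact Summable.sum_le_tsum s (fun n _ => mul_nonneg (haI0 n) (hMnn _))
            (gA_summable hM haI0 haIub (hXsum (φ j)))
  have hup : ∀ k, R k + gA M aI (X k) ≤ ry + gA M aI y + (μs k + 2*δs k*B) := by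
    intro k
    have h2 : gA M aI (X k) ≤ gA M (fun n => A k n + 2*δs k) (X k) :=
      gA_mono hM (c := 3/4*ε + 2*δs k) haI0 (haIup k)
        (fun n => by linarith only [hA34 k n]) (hXsum k)
    have h3 : gA M (fun n => A k n + 2*δs k) (X k) =
        gA M (A k) (X k) + ∑' n, ((A k n + 2*δs k) - A k n) * M |X k n| :=
      gA_sub hM (c := 3/4*ε + 2*δs k) (hA0le k)
        (fun n => by linarith only [hA34 k n, hδpos k])
        (fun n => by linarith only [hδpos k])
        (fun n => by linarith only [hδpos k, hε])
        (hXsum k)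
    have h4 : (∑' n, ((A k n + 2*δs k) - A k n) * M |X k n|) = 2*δs k * sg (X k) := by
      rw [hsgdef, ← tsum_mul_left]
      exact tsum_congr fun n => by ring
    rw [h3, h4] at h2
    have h5 : 2*δs k * sg (X k) ≤ 2*δs k*B :=
      mul_le_mul_of_nonneg_left (hsgX k) (by linarith only [hδpos k])
    have h6 : gA M (A k) y ≤ gA M aI y :=
      gA_mono hM (c := ε) (hA0le k) (fun n => haIlow k n) haIub hysum
    have h7 := hminreal k y hy ry hryd
    linarith only [h2, h5, h6, h7]
  have hη1k : ∀ k : ℕ, η₀ * (1/2)^k ≤ 1 :=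
    fun k => mul_le_one₀ (by linarith only [hη₀1]) (by positivity) (hpowle1 k)
  have hδgeo0 : ∀ k : ℕ, δs k ≤ (ε/8)*(1/2)^k := by
    intro k
    have h := hδgeo 0 k
    rw [hδs0] at h
    simpa using h
  have he : Filter.Tendsto (fun k => μs k + 2*δs k*B) Filter.atTop (nhds 0) := by
    apply tendsto_of_tendsto_of_tendsto_of_le_of_le (g := fun _ => (0:ℝ))
      (h := fun k => (ε/8)*(1/2:ℝ)^k*(1+2*B)) tendsto_const_nhds
    · have h := tendsto_pow_atTop_nhds_zero_of_lt_one
        (by norm_num : (0:ℝ) ≤ 1/2) (by norm_num : (1/2:ℝ) < 1)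
      have h2 := (h.const_mul (ε/8)).mul_const (1+2*B)
      simpa using h2
    · intro k
      show (0:ℝ) ≤ μs k + 2*δs k*B
      have h1 := hμpos k
      have h2 := hδpos k
      nlinarith [hB0]
    · intro k
      show μs k + 2*δs k*B ≤ (ε/8)*(1/2:ℝ)^k*(1+2*B)
      have h1 : μs k ≤ δs k := by
        rw [hμdef]
        have := hη1k k
        nlinarith [hδpos k]
      have h2 := hδgeo0 k
      have h3 : (0:ℝ) < (1/2:ℝ)^k := by positivity
      nlinarith [hδpos k, hB0]
  obtain ⟨j0, hj0⟩ := (he.eventually (gt_mem_nhds hγpos)).exists_forall_of_atTop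
  have hev3 : ∀ᶠ j in Filter.atTop, j0 ≤ φ j :=
    (Filter.eventually_ge_atTop j0).mono fun j hj => le_trans hj (hφge j)
  obtain ⟨j, h1, h2, h3⟩ := ((hnorm dl hdl).and (hFatou.and hev3)).exists
  have h4 := hdlsc (X (φ j)) (hXmem (φ j)) h1
  rw [hfX (φ j)] at h4
  have h5 : c - gA M aI xb < R (φ j) := by exact_mod_cast h4
  have h6 := hup (φ j)
  have h7 := hj0 (φ j) h3
  have hγ4 : c = ry + gA M aI y + 4*γ := by rw [hγdef]; ring
  linarith only [h5, h2, h6, h7, hγ4, hγpos]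
end

section
/- There is no non-trivial Fréchet differentiable bump on the space ℓ₁ of absolutely summable real sequences with its canonical norm: no function b : ℓ₁ → ℝ exists that is Fréchet differentiable at every point, is not identically zero, and has bounded support {x : b(x) ≠ 0}. -/
open Filter Topology

local notation "E1" => lp (fun _ : ℕ => ℝ) 1

section Aux

lemma l1_norm_single' (n : ℕ) (c : ℝ) : ‖(lp.single 1 n c : E1)‖ = |c| := by
  simpa using lp.norm_single (p := 1) (E := fun _ : ℕ => ℝ) (by norm_num) (fun _ => c) n

lemma l1_hasSum' (f : E1) : HasSum (fun i => |f i|) ‖f‖ := by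
  simpa using lp.hasSum_norm (p := 1) (E := fun _ : ℕ => ℝ) (by norm_num) f

/-- the set of "good" step sizes at `x`. -/
def goodSetAux (g : E1 → ℝ) (ε : ℝ) (x : E1) : Set ℝ :=
  {t | 0 < t ∧ t ≤ 1/2 ∧ ∀ n : ℕ, ∃ c : ℝ, |c| = t ∧ g x - ε * t ≤ g (x + lp.single 1 n c)}

lemma mem_goodSetAux {g : E1 → ℝ} {ε : ℝ} {x : E1} {t : ℝ} :
    t ∈ goodSetAux g ε x ↔
      0 < t ∧ t ≤ 1/2 ∧ ∀ n : ℕ, ∃ c : ℝ, |c| = t ∧ g x - ε * t ≤ g (x + lp.single 1 n c) :=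
  Iff.rfl

lemma goodSetAux_bddAbove (g : E1 → ℝ) (ε : ℝ) (x : E1) : BddAbove (goodSetAux g ε x) :=
  ⟨1/2, fun _ ht => ht.2.1⟩

/-- the recursive walk. -/
noncomputable def walkAux (x₀ : E1) (N₀ : ℕ) (cf : E1 → ℕ → ℝ) : ℕ → E1
  | 0 => x₀
  | (k+1) => walkAux x₀ N₀ cf k + lp.single 1 (k + N₀) (cf (walkAux x₀ N₀ cf k) (k + N₀))

lemma walkAux_zero (x₀ : E1) (N₀ : ℕ) (cf : E1 → ℕ → ℝ) : walkAux x₀ N₀ cf 0 = x₀ := rfl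

lemma walkAux_succ (x₀ : E1) (N₀ : ℕ) (cf : E1 → ℕ → ℝ) (k : ℕ) :
    walkAux x₀ N₀ cf (k+1) =
      walkAux x₀ N₀ cf k + lp.single 1 (k + N₀) (cf (walkAux x₀ N₀ cf k) (k + N₀)) := rfl

end Aux

/-- Key Fréchet-differentiability transfer lemma. -/
lemma transfer (g : E1 → ℝ) (ε : ℝ) (hε : 0 < ε) (y : E1) (hd : DifferentiableAt ℝ g y) :
    ∃ δ > 0, ∀ (x : E1) (t : ℝ) (n : ℕ), ‖x - y‖ ≤ t → 0 < t → t ≤ δ / 2 →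
      ∃ c : ℝ, |c| = t ∧ g x - ε * t ≤ g (x + lp.single 1 n c) := by
  obtain ⟨L, hLd⟩ : ∃ L : E1 →L[ℝ] ℝ, HasFDerivAt g L y := ⟨_, hd.hasFDerivAt⟩
  have key : ∃ δ > 0, ∀ h : E1, ‖h‖ ≤ δ →
      |g (y + h) - g y - L h| ≤ (ε/3) * ‖h‖ := by
    have h1 := hasFDerivAt_iff_isLittleO_nhds_zero.mp hLd
    rw [Asymptotics.isLittleO_iff] at h1
    have h2 := h1 (c := ε/3) (by positivity)
    rw [Metric.eventually_nhds_iff] at h2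
    obtain ⟨δ, hδ, hh⟩ := h2
    refine ⟨δ/2, by positivity, fun h hn => ?_⟩
    have hlt : dist h 0 < δ := by rw [dist_zero_right]; linarith
    simpa [Real.norm_eq_abs] using hh hlt
  obtain ⟨δ, hδ, hest⟩ := key
  refine ⟨δ, hδ, fun x t n hxy ht htδ => ?_⟩
  obtain ⟨c, habs, hLpos⟩ : ∃ c : ℝ, |c| = t ∧ 0 ≤ L (lp.single 1 n c) := by
    have hsingle : ∀ a : ℝ, (lp.single 1 n a : E1) = a • (lp.single 1 n 1 : E1) := by
      intro a; rw [← lp.single_smul]; norm_num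
    by_cases hLe : 0 ≤ L (lp.single 1 n 1)
    · refine ⟨t, abs_of_pos ht, ?_⟩
      rw [hsingle, map_smul, smul_eq_mul]
      exact mul_nonneg ht.le hLe
    · refine ⟨-t, by rw [abs_neg, abs_of_pos ht], ?_⟩
      rw [hsingle, map_smul, smul_eq_mul]
      nlinarith [lt_of_not_ge hLe]
  refine ⟨c, habs, ?_⟩
  have hnc : ‖(lp.single 1 n c : E1)‖ = t := by rw [l1_norm_single', habs]
  have h1 : ‖x - y + lp.single 1 n c‖ ≤ 2 * t := by
    have h := norm_add_le (x - y) (lp.single 1 n c : E1)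
    rw [hnc] at h
    linarith
  have e1 := hest (x - y + lp.single 1 n c) (by linarith)
  have e2 := hest (x - y) (by linarith)
  have heq1 : y + (x - y + lp.single 1 n c) = x + lp.single 1 n c := by abel
  have heq2 : y + (x - y) = x := by abel
  rw [heq1] at e1
  rw [heq2] at e2
  have hLadd : L (x - y + lp.single 1 n c) = L (x - y) + L (lp.single 1 n c) := map_add _ _ _
  rw [hLadd] at e1
  have a1 := (abs_le.mp e1).1
  have a2 := (abs_le.mp e2).2
  have hnun : 0 ≤ ‖x - y‖ := norm_nonneg _
  nlinarith

lemma goodSetAux_nonempty (g : E1 → ℝ) (ε : ℝ) (hε : 0 < ε) (x : E1)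
    (hd : DifferentiableAt ℝ g x) : (goodSetAux g ε x).Nonempty := by
  obtain ⟨δ, hδ, hδp⟩ := transfer g ε hε x hd
  refine ⟨min (δ/2) (1/2), lt_min (by positivity) (by norm_num), min_le_right _ _, fun n => ?_⟩
  exact hδp x _ n (by rw [sub_self, norm_zero]; positivity) (lt_min (by positivity) (by norm_num)) (min_le_left _ _)

/-- The main lemma: no nonneg differentiable function positive somewhere with bounded support. -/
lemma mainAux (g : E1 → ℝ) (hg : ∀ x, DifferentiableAt ℝ g x) (x₀ : E1) (h₀ : 0 < g x₀)
    (R : ℝ) (hR : 0 ≤ R) (hsupp : ∀ x : E1, R < ‖x‖ → g x = 0) : False := by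
  obtain ⟨ε, hε, hεR⟩ : ∃ ε : ℝ, 0 < ε ∧ ε * (R + 3) ≤ g x₀ / 2 :=
    ⟨g x₀ / (2*(R+3)), by positivity, le_of_eq (by field_simp)⟩
  -- greedy choice of step sizes
  have step : ∀ x : E1, ∃ t, t ∈ goodSetAux g ε x ∧ sSup (goodSetAux g ε x) / 2 < t := by
    intro x
    have hne := goodSetAux_nonempty g ε hε x (hg x)
    have hbd := goodSetAux_bddAbove g ε x
    obtain ⟨t', ht'⟩ := hne
    have hpos : 0 < sSup (goodSetAux g ε x) := lt_of_lt_of_le ht'.1 (le_csSup hbd ht')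
    exact exists_lt_of_lt_csSup ⟨t', ht'⟩ (by linarith)
  choose tf htf hts using step
  have htf1 : ∀ x, 0 < tf x := fun x => (htf x).1
  have htf2 : ∀ x, tf x ≤ 1/2 := fun x => (htf x).2.1
  choose cf hcabs hcge using fun x n => (htf x).2.2 n
  -- tail of x₀
  have hsx₀ : Summable (fun i => |x₀ i|) := (l1_hasSum' x₀).summable
  obtain ⟨N₀, hN₀⟩ : ∃ N₀ : ℕ, (∑' i : ℕ, |x₀ (i + N₀)|) ≤ 1 := by
    have := tendsto_sum_nat_add (fun i => |x₀ i|)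
    rw [Metric.tendsto_atTop] at this
    obtain ⟨N, hN⟩ := this 1 (by norm_num)
    refine ⟨N, ?_⟩
    have := hN N le_rfl
    rw [dist_zero_right, Real.norm_eq_abs] at this
    calc (∑' i : ℕ, |x₀ (i + N)|) ≤ abs (∑' i : ℕ, |x₀ (i + N)|) := le_abs_self _
    _ ≤ 1 := this.le
  -- the walk
  obtain ⟨X, hX⟩ : ∃ X : ℕ → E1, X = walkAux x₀ N₀ cf := ⟨_, rfl⟩
  have hX0 : X 0 = x₀ := by rw [hX]; rfl
  have hXs : ∀ k, X (k+1) = X k + lp.single 1 (k + N₀) (cf (X k) (k + N₀)) := by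
    intro k; rw [hX]; exact walkAux_succ x₀ N₀ cf k
  obtain ⟨T, hT⟩ : ∃ T : ℕ → ℝ, T = fun k => ∑ j ∈ Finset.range k, tf (X j) := ⟨_, rfl⟩
  have hT0 : T 0 = 0 := by rw [hT]; simp
  have hTs : ∀ k, T (k+1) = T k + tf (X k) := by
    intro k; rw [hT]; exact Finset.sum_range_succ _ _
  have hTdef : ∀ k, T k = ∑ j ∈ Finset.range k, tf (X j) := fun k => by rw [hT]
  -- invariant: value of g along the walk
  have hC : ∀ k, g x₀ - ε * T k ≤ g (X k) := by
    intro k; induction k with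
    | zero => rw [hX0, hT0]; nlinarith
    | succ k ih =>
      have h1 := hcge (X k) (k + N₀)
      rw [← hXs k] at h1
      rw [hTs]
      nlinarith [htf1 (X k)]
  -- invariant: high coordinates untouched
  have hAc : ∀ k m, k + N₀ ≤ m → (X k) m = x₀ m := by
    intro k; induction k with
    | zero => intro m _; rw [hX0]
    | succ k ih =>
      intro m hm
      rw [hXs, lp.coeFn_add, Pi.add_apply, lp.single_apply_ne 1 (k + N₀) _ (by omega : m ≠ k + N₀),
        add_zero]
      exact ih m (by omega)
  -- invariant: walked coordinates
  have hBc : ∀ k j, j < k → (X k) (j + N₀) = x₀ (j + N₀) + cf (X j) (j + N₀) := by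
    intro k; induction k with
    | zero => omega
    | succ k ih =>
      intro j hj
      rw [hXs, lp.coeFn_add, Pi.add_apply]
      rcases Nat.lt_succ_iff_lt_or_eq.mp hj with h | h
      · rw [lp.single_apply_ne 1 (k + N₀) _ (by omega : j + N₀ ≠ k + N₀), add_zero]
        exact ih j h
      · rw [h, lp.single_apply_self, hAc k (k + N₀) le_rfl]
  -- invariant: norm growth
  have hD : ∀ k, T k - 1 ≤ ‖X k‖ := by
    intro k
    have h1 : ∑ m ∈ (Finset.range k).image (fun j => j + N₀), |(X k) m| ≤ ‖X k‖ :=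
      sum_le_hasSum _ (fun i _ => abs_nonneg _) (l1_hasSum' (X k))
    rw [Finset.sum_image (fun a _ b _ h => by omega)] at h1
    have h2 : ∀ j ∈ Finset.range k, tf (X j) - |x₀ (j + N₀)| ≤ |(X k) (j + N₀)| := by
      intro j hj
      rw [hBc k j (Finset.mem_range.mp hj)]
      have h3 := abs_add_le (x₀ (j + N₀) + cf (X j) (j + N₀)) (-(x₀ (j + N₀)))
      have h4 : x₀ (j + N₀) + cf (X j) (j + N₀) + -(x₀ (j + N₀)) = cf (X j) (j + N₀) := by ring
      rw [h4, abs_neg, hcabs] at h3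
      linarith
    have h3 := Finset.sum_le_sum h2
    have hsx₀' : Summable (fun i : ℕ => |x₀ (i + N₀)|) :=
      (summable_nat_add_iff (f := fun i : ℕ => |x₀ i|) N₀).mpr hsx₀
    have h4 : ∑ j ∈ Finset.range k, |x₀ (j + N₀)| ≤ 1 := by
      refine le_trans (Summable.sum_le_tsum _ (fun i _ => abs_nonneg _) hsx₀') hN₀
    have h5 : ∑ j ∈ Finset.range k, (tf (X j) - |x₀ (j + N₀)|)
        = T k - ∑ j ∈ Finset.range k, |x₀ (j + N₀)| := by
      rw [hTdef]; exact Finset.sum_sub_distrib _ _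
    rw [h5] at h3
    linarith
  by_cases hcase : ∃ k, R + 2 ≤ T k
  · -- the walk escapes the support while g stays positive: contradiction
    have hspec : R + 2 ≤ T (Nat.find hcase) := Nat.find_spec hcase
    have hk₀pos : Nat.find hcase ≠ 0 := by
      intro h; rw [h, hT0] at hspec; linarith
    obtain ⟨m, hm⟩ := Nat.exists_eq_succ_of_ne_zero hk₀pos
    have hmlt : ¬ R + 2 ≤ T m := Nat.find_min hcase (by omega)
    push_neg at hmlt
    have hTk₀ : T (Nat.find hcase) ≤ R + 3 := by
      rw [hm, hTs]; have := htf2 (X m); linarith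
    have hmul : ε * T (Nat.find hcase) ≤ ε * (R + 3) :=
      mul_le_mul_of_nonneg_left hTk₀ hε.le
    have hg1 : g x₀ / 2 ≤ g (X (Nat.find hcase)) := by
      have := hC (Nat.find hcase); linarith
    have hgne : g (X (Nat.find hcase)) ≠ 0 := ne_of_gt (by linarith)
    have hnorm : ‖X (Nat.find hcase)‖ ≤ R := by
      by_contra h; push_neg at h; exact hgne (hsupp _ h)
    have := hD (Nat.find hcase)
    linarith
  · -- the walk converges; contradiction with the greedy choice at the limit
    push_neg at hcase
    have htnn : ∀ k, 0 ≤ tf (X k) := fun k => (htf1 _).le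
    have hsumt : Summable (fun k => tf (X k)) :=
      summable_of_sum_range_le htnn (fun k => by rw [← hTdef]; exact (hcase k).le)
    have hnu : ∀ j, ‖(lp.single 1 (j + N₀) (cf (X j) (j + N₀)) : E1)‖ = tf (X j) := by
      intro j; rw [l1_norm_single', hcabs]
    have hsummu : Summable (fun j => (lp.single 1 (j + N₀) (cf (X j) (j + N₀)) : E1)) :=
      Summable.of_norm (hsumt.congr (fun j => (hnu j).symm))
    have hpartial : ∀ k, X k = x₀ +
        ∑ j ∈ Finset.range k, (lp.single 1 (j + N₀) (cf (X j) (j + N₀)) : E1) := by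
      intro k; induction k with
      | zero => simp [hX0]
      | succ k ih => rw [hXs, Finset.sum_range_succ, ih]; abel
    obtain ⟨S, hS⟩ := hsummu
    have htend := hS.tendsto_sum_nat
    have hXtend : Tendsto X atTop (𝓝 (x₀ + S)) := by
      have h6 : Tendsto (fun k => x₀ +
          ∑ j ∈ Finset.range k, (lp.single 1 (j + N₀) (cf (X j) (j + N₀)) : E1))
          atTop (𝓝 (x₀ + S)) := tendsto_const_nhds.add htend
      exact h6.congr (fun k => (hpartial k).symm)
    obtain ⟨δ, hδ, hδp⟩ := transfer g ε hε (x₀ + S) (hg _)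
    obtain ⟨t₀, ht₀pos, ht₀half, ht₀δ⟩ : ∃ t₀ : ℝ, 0 < t₀ ∧ t₀ ≤ 1/2 ∧ t₀ ≤ δ/2 :=
      ⟨min (δ/2) (1/2), lt_min (by positivity) (by norm_num), min_le_right _ _, min_le_left _ _⟩
    have hev1 : ∀ᶠ k in atTop, ‖X k - (x₀ + S)‖ ≤ t₀ := by
      rw [Metric.tendsto_atTop] at hXtend
      obtain ⟨N1, hN1⟩ := hXtend t₀ ht₀pos
      rw [eventually_atTop]
      exact ⟨N1, fun k hk => by
        have := hN1 k hk; rw [dist_eq_norm] at this; linarith⟩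
    have hev2 : ∀ᶠ k in atTop, tf (X k) < t₀ / 2 := by
      have h0 := hsumt.tendsto_atTop_zero
      rw [Metric.tendsto_atTop] at h0
      obtain ⟨N2, hN2⟩ := h0 (t₀/2) (by positivity)
      rw [eventually_atTop]
      refine ⟨N2, fun k hk => ?_⟩
      have := hN2 k hk
      rw [dist_zero_right, Real.norm_eq_abs] at this
      calc tf (X k) ≤ |tf (X k)| := le_abs_self _
      _ < t₀ / 2 := this
    obtain ⟨k, h1k, h2k⟩ := (hev1.and hev2).exists
    have hmem : t₀ ∈ goodSetAux g ε (X k) :=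
      ⟨ht₀pos, ht₀half, fun n => hδp (X k) t₀ n h1k ht₀pos ht₀δ⟩
    have hle : t₀ ≤ sSup (goodSetAux g ε (X k)) := le_csSup (goodSetAux_bddAbove g ε (X k)) hmem
    have := hts (X k)
    linarith

/-- There is no non-trivial Fréchet differentiable bump on `ℓ₁`: no function `b : ℓ₁ → ℝ`
is Fréchet differentiable at every point, not identically zero, and has bounded support. -/
theorem stmt14 :
    ¬ ∃ b : lp (fun _ : ℕ => ℝ) 1 → ℝ,
      (∀ x, DifferentiableAt ℝ b x) ∧
      (∃ x, b x ≠ 0) ∧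
      Bornology.IsBounded {x | b x ≠ 0} := by
  rintro ⟨b, hdiff, ⟨x₀, hx₀⟩, hbdd⟩
  obtain ⟨C, hC⟩ := isBounded_iff_forall_norm_le.mp hbdd
  refine mainAux (fun x => (b x)^2) (fun x => (hdiff x).pow 2) x₀
    (pow_two_pos_of_ne_zero hx₀) (max C 0) (le_max_right _ _) ?_
  intro x hx
  by_contra h
  have hbx : b x ≠ 0 := fun h0 => h (by show b x ^ 2 = 0; rw [h0]; ring)
  have := hC x hbx
  have := le_max_left C 0
  linarith
end

section
/- Let x = (x_n) be a real sequence with x_n → 0 and Σ|x_n| < ∞, let a = (a_n) be a bounded real sequence with a_n ≥ 1 for all n, and define g_a(y) := Σ_{n=1}^∞ a_n |y_n| for y ∈ ℓ₁. Then for every t > 0, sup_n [g_a(x + t e_n) + g_a(x − t e_n) − 2 g_a(x)] ≥ 2t, where e_n is the n-th canonical unit sequence; consequently limsup_{‖h‖₁ → 0} [g_a(x+h) + g_a(x−h) − 2 g_a(x)]/‖h‖₁ ≥ 2. -/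
open Filter Topology

/-- `g_a(y) = Σ_n a_n |y_n|`. -/
noncomputable def gAbs (a y : ℕ → ℝ) : ℝ :=
  ∑' n, a n * |y n|

lemma gAbs_update (a x : ℕ → ℝ) (hF : Summable fun m => a m * |x m|) (n : ℕ) (v : ℝ) :
    gAbs a (Function.update x n v) = gAbs a x - a n * |x n| + a n * |v| := by
  unfold gAbs
  have hG : (fun m => a m * |Function.update x n v m|)
      = Function.update (fun m => a m * |x m|) n (a n * |v|) := by
    funext m
    rcases eq_or_ne m n with rfl | hm
    · simp
    · simp [Function.update_of_ne hm]
  rw [hG]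
  rw [Summable.tsum_eq_add_tsum_ite (hF.update n (a n * |v|)) n, Summable.tsum_eq_add_tsum_ite hF n]
  have : (∑' m, if m = n then 0 else Function.update (fun m => a m * |x m|) n (a n * |v|) m)
      = ∑' m, if m = n then 0 else a m * |x m| := by
    apply tsum_congr
    intro m
    rcases eq_or_ne m n with rfl | hm
    · simp
    · simp [Function.update_of_ne hm, hm]
  rw [this, Function.update_self]
  ring

/-- Let `x ∈ ℓ₁` with `x_n → 0`, and let `a` be a bounded sequence with `a_n ≥ 1`. Then
for every `t > 0`, `sup_n [g_a(x + t e_n) + g_a(x − t e_n) − 2 g_a(x)] ≥ 2t`; consequently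
`limsup_{‖h‖₁ → 0} [g_a(x+h) + g_a(x−h) − 2 g_a(x)]/‖h‖₁ ≥ 2`. -/
theorem stmt15 (x a : ℕ → ℝ)
    (hx0 : Tendsto x atTop (𝓝 0))
    (hxs : Summable fun n => |x n|)
    (ha1 : ∀ n, 1 ≤ a n) (hab : ∃ A : ℝ, ∀ n, a n ≤ A) :
    (∀ t : ℝ, 0 < t → ∀ c < 2 * t, ∃ n : ℕ,
      c < gAbs a (x + t • (Pi.single n 1 : ℕ → ℝ)) + gAbs a (x - t • (Pi.single n 1 : ℕ → ℝ)) - 2 * gAbs a x) ∧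
    (∀ ε > (0 : ℝ), ∀ δ > (0 : ℝ), ∃ h : ℕ → ℝ, Summable (fun n => |h n|) ∧
      0 < ∑' n, |h n| ∧ (∑' n, |h n|) < δ ∧
      2 - ε < (gAbs a (x + h) + gAbs a (x - h) - 2 * gAbs a x) / ∑' n, |h n|) := by
  obtain ⟨A, hA⟩ := hab
  have hF : Summable fun m => a m * |x m| := by
    apply Summable.of_nonneg_of_le
      (fun m => mul_nonneg (le_trans zero_le_one (ha1 m)) (abs_nonneg _))
      (fun m => ?_) (hxs.mul_left A)
    exact mul_le_mul_of_nonneg_right (hA m) (abs_nonneg _)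
  have hplus : ∀ (n : ℕ) (t : ℝ), x + t • (Pi.single n 1 : ℕ → ℝ) = Function.update x n (x n + t) := by
    intro n t
    funext m
    rcases eq_or_ne m n with rfl | hm
    · simp
    · simp [Function.update_of_ne hm, Pi.single_eq_of_ne hm]
  have hminus : ∀ (n : ℕ) (t : ℝ), x - t • (Pi.single n 1 : ℕ → ℝ) = Function.update x n (x n - t) := by
    intro n t
    funext m
    rcases eq_or_ne m n with rfl | hm
    · simp
    · simp [Function.update_of_ne hm, Pi.single_eq_of_ne hm]
  have key : ∀ t : ℝ, 0 < t → ∀ c < 2 * t, ∃ n : ℕ,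
      c < gAbs a (x + t • (Pi.single n 1 : ℕ → ℝ)) + gAbs a (x - t • (Pi.single n 1 : ℕ → ℝ)) - 2 * gAbs a x := by
    intro t ht c hc
    have hsm : ∀ᶠ n in atTop, |x n| < (2 * t - c) / 2 := by
      have h0 := hx0.abs
      simp only [abs_zero] at h0
      exact h0.eventually (eventually_lt_nhds (by linarith))
    obtain ⟨n, hn⟩ := hsm.exists
    refine ⟨n, ?_⟩
    rw [hplus, hminus, gAbs_update a x hF, gAbs_update a x hF]
    have h1 : 1 ≤ a n := ha1 n
    have h2 : 2 * t ≤ |x n + t| + |x n - t| := by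
      have := abs_sub (x n + t) (x n - t)
      have h3 : |(x n + t) - (x n - t)| = 2 * t := by
        rw [show (x n + t) - (x n - t) = 2 * t by ring, abs_of_pos (by linarith)]
      calc 2 * t = |(x n + t) - (x n - t)| := h3.symm
        _ ≤ |x n + t| + |x n - t| := abs_sub _ _
    have h4 : 2 * |x n| ≤ |x n + t| + |x n - t| := by
      calc 2 * |x n| = |(x n + t) + (x n - t)| := by
            rw [show (x n + t) + (x n - t) = 2 * x n by ring, abs_mul]; simp [abs_of_pos]
        _ ≤ |x n + t| + |x n - t| := abs_add_le _ _
    nlinarith [abs_nonneg (x n)]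
  refine ⟨key, ?_⟩
  intro ε hε δ hδ
  set t := δ / 2 with ht
  have htpos : 0 < t := by positivity
  obtain ⟨n, hn⟩ := key t htpos ((2 - ε) * t) (by nlinarith)
  refine ⟨t • (Pi.single n 1 : ℕ → ℝ), ?_, ?_, ?_, ?_⟩
  · have : (fun m => |(t • (Pi.single n 1 : ℕ → ℝ)) m|) = fun m => (Pi.single n t : ℕ → ℝ) m := by
      funext m
      rcases eq_or_ne m n with rfl | hm
      · simp [abs_of_pos htpos]
      · simp [Pi.single_eq_of_ne hm]
    rw [this]
    exact summable_of_finite_support (Set.Finite.subset (Set.finite_singleton n)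
      (fun m hm => by by_contra h; exact hm (by simp [Pi.single_eq_of_ne h])))
  all_goals {
    have hts : (∑' m, |(t • (Pi.single n 1 : ℕ → ℝ)) m|) = t := by
      have : (fun m => |(t • (Pi.single n 1 : ℕ → ℝ)) m|) = fun m => (Pi.single n t : ℕ → ℝ) m := by
        funext m
        rcases eq_or_ne m n with rfl | hm
        · simp [abs_of_pos htpos]
        · simp [Pi.single_eq_of_ne hm]
      rw [this]
      have h5 := tsum_eq_single (L := SummationFilter.unconditional ℕ) (f := fun m => (Pi.single n t : ℕ → ℝ) m) n
        (fun m hm => by simp [Pi.single_eq_of_ne hm])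
      simpa using h5
    rw [hts]
    first
      | exact htpos
      | (show t < δ; rw [ht]; linarith)
      | exact (lt_div_iff₀ htpos).mpr hn
  }
end
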